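/- Let H be a countably based residually finite group. Then there exists a sequence 𝔛 of finite sets, each of cardinality at least 2, and a subgroup Λ ≤ Aut(T_𝔛) such that: Λ is spherically transitive and layered (hence a branch group); Λ contains a subgroup isomorphic to H; and there is an injective map from Max(H) into the set of maximal subgroups of Λ. -/

import Mathlib

namespace BranchPaper

universe u

/-- Vertices at level `n` of the rooted tree defined by the sequence of alphabets `X`:
strings `x₁ ⋯ x_n` with `x_{i+1} ∈ X i` (we index alphabets from `0`). -/
abbrev Vertex (X : ℕ → Type u) (n : ℕ) : Type u := ∀ i : Fin n, X (i : ℕ)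

/-- The shifted sequence of alphabets `𝔛.σⁿ`. -/
abbrev shift (X : ℕ → Type u) (n : ℕ) : ℕ → Type u := fun k => X (n + k)

variable {X : ℕ → Type u}

/-- Compatibility of a sequence of level permutations with truncation: this is precisely
the condition for the family to define an automorphism of the rooted tree. -/
def Compat (p : ∀ n, Equiv.Perm (Vertex X n)) : Prop :=
  ∀ (n : ℕ) (v : Vertex X (n + 1)), Fin.init (p (n + 1) v) = p n (Fin.init v)

/-- The automorphism group of the rooted tree `T_X`, realised as the subgroup of
`∏ₙ Sym(L(n))` of families of layer permutations compatible with truncation. -/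
def treeAutGroup (X : ℕ → Type u) : Subgroup (∀ n, Equiv.Perm (Vertex X n)) where
  carrier := {p | Compat p}
  one_mem' := fun _ _ => rfl
  mul_mem' := by
    intro a b ha hb n v
    show Fin.init (a (n + 1) (b (n + 1) v)) = a n (b n (Fin.init v))
    rw [ha, hb]
  inv_mem' := by
    intro a ha n v
    apply (a n).injective
    show a n (Fin.init ((a (n + 1))⁻¹ v)) = a n ((a n)⁻¹ (Fin.init v))
    rw [← ha n ((a (n + 1))⁻¹ v), Equiv.Perm.inv_def, Equiv.apply_symm_apply,
      Equiv.Perm.inv_def, Equiv.apply_symm_apply]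

/-- `Aut(T_X)`. -/
abbrev TreeAut (X : ℕ → Type u) := ↥(treeAutGroup X)

lemma mem_treeAutGroup {p : ∀ n, Equiv.Perm (Vertex X n)} : p ∈ treeAutGroup X ↔ Compat p :=
  Iff.rfl

lemma TreeAut.compat (g : TreeAut X) : Compat (g.1) := g.2

/-- The first `n` letters of a vertex of length `n + m`. -/
def front {n m : ℕ} (w : Vertex X (n + m)) : Vertex X n := fun i => w (Fin.castAdd m i)

/-- The last `m` letters of a vertex of length `n + m`, as a vertex of the shifted tree. -/
def back {n m : ℕ} (w : Vertex X (n + m)) : Vertex (shift X n) m := fun i => w (Fin.natAdd n i)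

/-- Concatenation of a vertex of `T_X` with a vertex of the shifted tree. -/
def append {n m : ℕ} (v : Vertex X n) (w : Vertex (shift X n) m) : Vertex X (n + m) :=
  Fin.addCases (motive := fun i => X (i : ℕ)) v w

@[simp] lemma front_append {n m : ℕ} (v : Vertex X n) (w : Vertex (shift X n) m) :
    front (append v w) = v := by
  funext i
  show Fin.addCases (motive := fun i => X (i : ℕ)) v w (Fin.castAdd m i) = v i
  exact Fin.addCases_left i

@[simp] lemma back_append {n m : ℕ} (v : Vertex X n) (w : Vertex (shift X n) m) :
    back (append v w) = w := by
  funext i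
  show Fin.addCases (motive := fun i => X (i : ℕ)) v w (Fin.natAdd n i) = w i
  exact Fin.addCases_right i

@[simp] lemma append_front_back {n m : ℕ} (w : Vertex X (n + m)) :
    append (front w) (back w) = w := by
  funext i
  induction i using Fin.addCases with
  | left i =>
      show Fin.addCases (motive := fun i => X (i : ℕ)) (front w) (back w) (Fin.castAdd m i)
        = w (Fin.castAdd m i)
      rw [Fin.addCases_left]
      rfl
  | right i =>
      show Fin.addCases (motive := fun i => X (i : ℕ)) (front w) (back w) (Fin.natAdd n i)
        = w (Fin.natAdd n i)
      rw [Fin.addCases_right]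
      rfl

lemma init_append {n m : ℕ} (v : Vertex X n) (w : Vertex (shift X n) (m + 1)) :
    Fin.init (n := n + m) (append (n := n) (m := m + 1) v w) = append v (Fin.init w) := by
  funext i
  induction i using Fin.addCases with
  | left i =>
      have h1 : Fin.addCases (motive := fun j => X (j : ℕ)) v w (Fin.castAdd (m + 1) i)
          = v i := Fin.addCases_left i
      have h2 : Fin.addCases (motive := fun j => X (j : ℕ)) v (Fin.init w) (Fin.castAdd m i)
          = v i := Fin.addCases_left i
      exact h1.trans h2.symm
  | right i =>
      have h1 : Fin.addCases (motive := fun j => X (j : ℕ)) v w (Fin.natAdd n i.castSucc)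
          = w i.castSucc := Fin.addCases_right i.castSucc
      have h2 : Fin.addCases (motive := fun j => X (j : ℕ)) v (Fin.init w) (Fin.natAdd n i)
          = Fin.init w i := Fin.addCases_right i
      exact h1.trans h2.symm

lemma front_act (g : TreeAut X) (n : ℕ) :
    ∀ (m : ℕ) (w : Vertex X (n + m)), front (g.1 (n + m) w) = g.1 n (front w) := by
  intro m
  induction m with
  | zero => intro w; rfl
  | succ m ih =>
      intro w
      calc front (g.1 (n + (m + 1)) w)
          = front (m := m) (Fin.init (n := n + m) (g.1 (n + m + 1) w)) := rfl
        _ = front (m := m) (g.1 (n + m) (Fin.init (n := n + m) w)) := by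
              rw [g.compat (n + m) w]
        _ = g.1 n (front (Fin.init (n := n + m) w)) := ih _
        _ = g.1 n (front w) := rfl

lemma coe_inv_apply (g : TreeAut X) (n : ℕ) (v : Vertex X n) :
    (g⁻¹).1 n v = (g.1 n)⁻¹ v := rfl

/-- The section `g|_v` of a tree automorphism at a vertex `v`, an automorphism of the
shifted tree, characterised by `g (v * w) = g v * (g|_v) w`. -/
def sectionAt (g : TreeAut X) {n : ℕ} (v : Vertex X n) : TreeAut (shift X n) :=
  ⟨fun m =>
    { toFun := fun w => back (g.1 (n + m) (append v w))
      invFun := fun w => back ((g⁻¹).1 (n + m) (append (g.1 n v) w))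
      left_inv := by
        intro w
        have hfront : front (g.1 (n + m) (append v w)) = g.1 n v := by
          rw [front_act, front_append]
        have key := append_front_back (g.1 (n + m) (append v w))
        rw [hfront] at key
        show back ((g⁻¹).1 (n + m) (append (g.1 n v) (back (g.1 (n + m) (append v w))))) = w
        rw [key]
        have h2 : (g⁻¹).1 (n + m) (g.1 (n + m) (append v w)) = append v w := by
          show (g.1 (n + m))⁻¹ (g.1 (n + m) (append v w)) = append v w
          exact Equiv.symm_apply_apply _ _
        rw [h2, back_append]
      right_inv := by
        intro w
        have hfront : front ((g⁻¹).1 (n + m) (append (g.1 n v) w)) = v := by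
          rw [front_act, front_append]
          show (g.1 n)⁻¹ (g.1 n v) = v
          exact Equiv.symm_apply_apply _ _
        have key := append_front_back ((g⁻¹).1 (n + m) (append (g.1 n v) w))
        rw [hfront] at key
        show back (g.1 (n + m) (append v (back ((g⁻¹).1 (n + m) (append (g.1 n v) w))))) = w
        rw [key]
        have h2 : g.1 (n + m) ((g⁻¹).1 (n + m) (append (g.1 n v) w)) = append (g.1 n v) w := by
          show g.1 (n + m) ((g.1 (n + m))⁻¹ (append (g.1 n v) w)) = append (g.1 n v) w
          exact Equiv.apply_symm_apply _ _
        rw [h2, back_append] },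
   by
    intro m w
    have h1 : Fin.init (n := n + m) (g.1 (n + m + 1) (append (n := n) (m := m + 1) v w))
        = g.1 (n + m) (Fin.init (n := n + m) (append (n := n) (m := m + 1) v w)) :=
      g.compat (n + m) (append (n := n) (m := m + 1) v w)
    calc Fin.init (back (n := n) (m := m + 1)
            (g.1 (n + (m + 1)) (append (n := n) (m := m + 1) v w)))
        = back (m := m) (Fin.init (n := n + m)
            (g.1 (n + m + 1) (append (n := n) (m := m + 1) v w))) := rfl
      _ = back (m := m) (g.1 (n + m)
            (Fin.init (n := n + m) (append (n := n) (m := m + 1) v w))) := by rw [h1]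
      _ = back (g.1 (n + m) (append v (Fin.init w))) := by rw [init_append v w]⟩

/-- An automorphism is finitary if all sections at some level are trivial. -/
def Finitary (g : TreeAut X) : Prop := ∃ n : ℕ, ∀ v : Vertex X n, sectionAt g v = 1

/-- `v` is a prefix of `w`. -/
def IsPrefixOf {n k : ℕ} (v : Vertex X n) (w : Vertex X k) : Prop :=
  ∃ h : n ≤ k, ∀ i : Fin n, w (Fin.castLE h i) = v i

/-- `g` fixes every vertex which does not have `v` as a prefix. -/
def FixesOutside (g : TreeAut X) {n : ℕ} (v : Vertex X n) : Prop :=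
  ∀ (k : ℕ) (w : Vertex X k), ¬ IsPrefixOf v w → g.1 k w = w

/-- A group of tree automorphisms acts spherically transitively if it acts transitively
on every layer. -/
def SphericallyTransitive (G : Subgroup (TreeAut X)) : Prop :=
  ∀ (n : ℕ) (v w : Vertex X n), ∃ g ∈ G, g.1 n v = w

/-- A group of tree automorphisms is layered if for every `g ∈ G` and every vertex `v`,
the insertion `ins_v (g|_v)` (the unique automorphism fixing everything outside the
subtree at `v` and with section `g|_v` at `v`) again belongs to `G`. -/
def Layered (G : Subgroup (TreeAut X)) : Prop :=
  ∀ g ∈ G, ∀ (n : ℕ) (v : Vertex X n),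
    ∃ h : TreeAut X, h ∈ G ∧ FixesOutside h v ∧ sectionAt h v = sectionAt g v

/-- The rigid vertex stabiliser of `v` in `G`. -/
def rist (G : Subgroup (TreeAut X)) {n : ℕ} (v : Vertex X n) : Subgroup (TreeAut X) where
  carrier := {g | g ∈ G ∧ FixesOutside g v}
  one_mem' := ⟨G.one_mem, fun _ _ _ => rfl⟩
  mul_mem' := by
    rintro a b ⟨haG, ha⟩ ⟨hbG, hb⟩
    refine ⟨G.mul_mem haG hbG, fun k w hw => ?_⟩
    show a.1 k (b.1 k w) = w
    rw [hb k w hw, ha k w hw]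
  inv_mem' := by
    rintro a ⟨haG, ha⟩
    refine ⟨G.inv_mem haG, fun k w hw => ?_⟩
    apply (a.1 k).injective
    show a.1 k ((a.1 k)⁻¹ w) = a.1 k w
    rw [Equiv.Perm.inv_def, Equiv.apply_symm_apply, ha k w hw]

/-- The rigid layer stabiliser `Rist_G(n)`, the subgroup generated by the rigid vertex
stabilisers of the vertices in layer `n`. -/
def RistL (G : Subgroup (TreeAut X)) (n : ℕ) : Subgroup (TreeAut X) :=
  Subgroup.closure (⋃ v : Vertex X n, (rist G v : Set (TreeAut X)))

/-- A ray in the rooted tree. -/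
def IsRay (u : ∀ n, Vertex X n) : Prop := ∀ n, Fin.init (u (n + 1)) = u n

/-- A `𝔲`-generalised spinal element: all sections away from the ray are finitary. -/
def GeneralisedSpinal (u : ∀ n, Vertex X n) (g : TreeAut X) : Prop :=
  ∀ (n : ℕ) (v : Vertex X n), v ≠ u n → Finitary (sectionAt g v)

section Portrait

/-- The action on layers induced by a portrait (a labelling of the vertices by
permutations of the corresponding alphabets). -/
def portraitAct (L : ∀ n, Vertex X n → Equiv.Perm (X n)) : ∀ n, Vertex X n → Vertex X n
  | 0, v => v
  | (n + 1), v =>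
      Fin.snoc (portraitAct L n (Fin.init v)) (L n (Fin.init v) (v (Fin.last n)))

lemma portraitAct_injective (L : ∀ n, Vertex X n → Equiv.Perm (X n)) :
    ∀ n, Function.Injective (portraitAct L n)
  | 0 => fun _ _ h => h
  | (n + 1) => by
      intro a b h
      simp only [portraitAct] at h
      have hinit : Fin.init a = Fin.init b := by
        apply portraitAct_injective L n
        have := congrArg Fin.init h
        simpa [Fin.init_snoc] using this
      have hlast : a (Fin.last n) = b (Fin.last n) := by
        have h2 := congrFun h (Fin.last n)
        rw [Fin.snoc_last, Fin.snoc_last, hinit] at h2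
        exact (L n (Fin.init b)).injective h2
      calc a = Fin.snoc (Fin.init a) (a (Fin.last n)) := (Fin.snoc_init_self a).symm
        _ = Fin.snoc (Fin.init b) (b (Fin.last n)) := by rw [hinit, hlast]
        _ = b := Fin.snoc_init_self b

/-- The tree automorphism determined by a portrait. -/
noncomputable def ofPortrait [∀ k, Finite (X k)] (L : ∀ n, Vertex X n → Equiv.Perm (X n)) :
    TreeAut X :=
  ⟨fun n => Equiv.ofBijective (portraitAct L n)
      (Finite.injective_iff_bijective.mp (portraitAct_injective L n)),
   by
    intro n v
    show Fin.init (portraitAct L (n + 1) v) = portraitAct L n (Fin.init v)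
    simp [portraitAct, Fin.init_snoc]⟩

end Portrait

section Construction

variable (S : ℕ → Type u)

/-- The spinal automorphism determined by a sequence `c` of group elements: it has the
rooted permutation induced by `c k` at the vertex `u_k x_{k+1}` and trivial label
everywhere else. -/
noncomputable def spinalAut [∀ k, Finite (X k)] [∀ n, Group (S n)]
    [∀ n, MulAction (S n) (X n)] (u : ∀ n, Vertex X n) (x : ∀ n, X n)
    (c : ∀ n, S (n + 1)) : TreeAut X :=
  ofPortrait (fun n => match n with
    | 0 => fun _ => 1
    | (k + 1) => fun v =>
        haveI := Classical.propDecidable (v = Fin.snoc (u k) (x k))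
        if v = Fin.snoc (u k) (x k) then MulAction.toPerm (c k) else 1)

/-- The rooted automorphism induced by an element acting on the first alphabet. -/
noncomputable def rootedAut (X : ℕ → Type u) [∀ k, Finite (X k)] {R : Type*} [Group R]
    [MulAction R (X 0)] (s : R) : TreeAut X :=
  ofPortrait (fun n => match n with
    | 0 => fun _ => MulAction.toPerm s
    | (_ + 1) => fun _ => 1)

/-- The group `Fin_𝔖(T)` of finitary automorphisms all of whose labels lie in the images
of the groups `S n` acting on the alphabets, described as a set. -/
def finSet (X : ℕ → Type u) (S : ℕ → Type u) [∀ n, Group (S n)]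
    [∀ n, MulAction (S n) (X n)] : Set (TreeAut X) :=
  {g | Finitary g ∧ ∀ (n : ℕ) (v : Vertex X n), ∃ s : S n, ∀ y : X n,
      g.1 (n + 1) (Fin.snoc v y) (Fin.last n) = s • y}

variable {G : Type u} [Group G]

/-- The branch group `Γ` of the construction. -/
noncomputable def gammaGroup [∀ k, Finite (X k)] [∀ n, Group (S n)]
    [∀ n, MulAction (S n) (X n)] (φ : G →* ∀ n, S (n + 1))
    (u : ∀ n, Vertex X n) (x : ∀ n, X n) : Subgroup (TreeAut X) :=
  Subgroup.closure
    (Set.range (fun s : S 0 => rootedAut X s) ∪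
     Set.range (fun g : G => spinalAut S u x (fun n => φ g n)))

/-- The subgroup `Δ(H) = ⟨Fin_𝔖(T) ∪ {s_h : h ∈ H}⟩`. -/
noncomputable def deltaGroup [∀ k, Finite (X k)] [∀ n, Group (S n)]
    [∀ n, MulAction (S n) (X n)] (φ : G →* ∀ n, S (n + 1))
    (u : ∀ n, Vertex X n) (x : ∀ n, X n) (H : Subgroup G) : Subgroup (TreeAut X) :=
  Subgroup.closure
    (finSet X S ∪ ((fun g : G => spinalAut S u x (fun n => φ g n)) '' (H : Set G)))

end Construction


/-! ### Auxiliary development for the proof of `statement16`. -/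

section Generic

variable {Y : ℕ → Type u}

lemma treeAut_ext {g h : TreeAut Y} (H : ∀ (k : ℕ) (w : Vertex Y k), g.1 k w = h.1 k w) :
    g = h :=
  Subtype.ext (funext fun k => Equiv.ext (H k))

lemma treeAut_one_apply (k : ℕ) (w : Vertex Y k) : (1 : TreeAut Y).1 k w = w := rfl

lemma treeAut_mul_apply (g h : TreeAut Y) (k : ℕ) (w : Vertex Y k) :
    (g * h).1 k w = g.1 k (h.1 k w) := rfl

/-- Truncation of a vertex to one of its prefixes. -/
def trunc {k : ℕ} (w : Vertex Y k) (i : ℕ) (h : i ≤ k) : Vertex Y i :=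
  fun j => w (Fin.castLE h j)

lemma trunc_trunc {k : ℕ} (w : Vertex Y k) (i : ℕ) (h : i ≤ k) (i' : ℕ) (h' : i' ≤ i) :
    trunc (trunc w i h) i' h' = trunc w i' (h'.trans h) := by
  funext j
  rfl

lemma init_eq_trunc {k : ℕ} (w : Vertex Y (k + 1)) :
    Fin.init w = trunc w k (Nat.le_succ k) := by
  funext j
  rfl

lemma trunc_init {k : ℕ} (w : Vertex Y (k + 1)) (i : ℕ) (h : i ≤ k) :
    trunc (Fin.init w) i h = trunc w i (h.trans (Nat.le_succ k)) := by
  rw [init_eq_trunc, trunc_trunc]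

lemma portraitAct_letter (L : ∀ n, Vertex Y n → Equiv.Perm (Y n)) :
    ∀ (k : ℕ) (w : Vertex Y k) (i : Fin k),
      portraitAct L k w i = L i (trunc w i (le_of_lt i.isLt)) (w i) := by
  intro k
  induction k with
  | zero => intro w i; exact i.elim0
  | succ k ih =>
      intro w i
      have hdef : portraitAct L (k + 1) w
          = Fin.snoc (α := fun i : Fin (k + 1) => Y (i : ℕ))
            (portraitAct L k (Fin.init w)) (L k (Fin.init w) (w (Fin.last k))) := rfl
      refine Fin.lastCases ?_ ?_ i
      · rw [hdef, Fin.snoc_last, init_eq_trunc]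
        rfl
      · intro j
        rw [hdef, Fin.snoc_castSucc, ih (Fin.init w) j, trunc_init]
        rfl

lemma ofPortrait_apply [∀ k, Finite (Y k)] (L : ∀ n, Vertex Y n → Equiv.Perm (Y n))
    (k : ℕ) (w : Vertex Y k) : (ofPortrait L).1 k w = portraitAct L k w := rfl

lemma trunc_portraitAct (L : ∀ n, Vertex Y n → Equiv.Perm (Y n)) (k : ℕ)
    (w : Vertex Y k) (i : ℕ) (h : i ≤ k) :
    trunc (portraitAct L k w) i h = portraitAct L i (trunc w i h) := by
  funext j
  show portraitAct L k w (Fin.castLE h j) = _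
  rw [portraitAct_letter, portraitAct_letter, trunc_trunc]
  rfl

lemma ofPortrait_mul [∀ k, Finite (Y k)] (L₁ L₂ : ∀ n, Vertex Y n → Equiv.Perm (Y n)) :
    ofPortrait L₁ * ofPortrait L₂
      = ofPortrait (fun k v => L₁ k (portraitAct L₂ k v) * L₂ k v) := by
  apply treeAut_ext
  intro k w
  show portraitAct L₁ k (portraitAct L₂ k w) = portraitAct _ k w
  funext i
  rw [portraitAct_letter, portraitAct_letter, portraitAct_letter, trunc_portraitAct]
  rfl

lemma ofPortrait_eq_one [∀ k, Finite (Y k)] (L : ∀ n, Vertex Y n → Equiv.Perm (Y n))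
    (h : ∀ (k : ℕ) (p : Vertex Y k), L k p = 1) : ofPortrait L = 1 := by
  apply treeAut_ext
  intro k w
  show portraitAct L k w = w
  funext i
  rw [portraitAct_letter, h]
  rfl

/-- `g` does not change any letter at position `≥ j`. -/
def FinUpTo (j : ℕ) (g : TreeAut Y) : Prop :=
  ∀ (k : ℕ) (w : Vertex Y k) (i : Fin k), j ≤ (i : ℕ) → g.1 k w i = w i

lemma FinUpTo.mono {j j' : ℕ} {g : TreeAut Y} (h : FinUpTo j g) (hj : j ≤ j') :
    FinUpTo j' g := fun k w i hi => h k w i (hj.trans hi)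

lemma finUpTo_one (j : ℕ) : FinUpTo j (1 : TreeAut Y) := fun _ _ _ _ => rfl

lemma FinUpTo.mul {j : ℕ} {g h : TreeAut Y} (hg : FinUpTo j g) (hh : FinUpTo j h) :
    FinUpTo j (g * h) := by
  intro k w i hi
  rw [treeAut_mul_apply, hg k _ i hi, hh k w i hi]

lemma FinUpTo.inv {j : ℕ} {g : TreeAut Y} (hg : FinUpTo j g) : FinUpTo j g⁻¹ := by
  intro k w i hi
  have h1 : g.1 k ((g⁻¹).1 k w) = w := by
    rw [coe_inv_apply]
    exact (g.1 k).apply_symm_apply w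
  conv_rhs => rw [← h1]
  rw [hg k _ i hi]

/-- The group of finitary automorphisms. -/
def finSub (Y : ℕ → Type u) : Subgroup (TreeAut Y) where
  carrier := {g | ∃ j, FinUpTo j g}
  one_mem' := ⟨0, finUpTo_one 0⟩
  mul_mem' := by
    rintro a b ⟨j, hj⟩ ⟨j', hj'⟩
    exact ⟨max j j', (hj.mono (le_max_left _ _)).mul (hj'.mono (le_max_right _ _))⟩
  inv_mem' := by
    rintro a ⟨j, hj⟩
    exact ⟨j, hj.inv⟩

lemma finUpTo_ofPortrait [∀ k, Finite (Y k)] (L : ∀ n, Vertex Y n → Equiv.Perm (Y n))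
    (j : ℕ) (h : ∀ (k : ℕ) (p : Vertex Y k), j ≤ k → L k p = 1) :
    FinUpTo j (ofPortrait L) := by
  intro k w i hi
  show portraitAct L k w i = w i
  rw [portraitAct_letter, h _ _ hi]
  rfl

lemma append_castAdd {n m : ℕ} (v : Vertex Y n) (w : Vertex (shift Y n) m) (i : Fin n) :
    append v w (Fin.castAdd m i) = v i := congrFun (front_append v w) i

lemma append_natAdd {n m : ℕ} (v : Vertex Y n) (w : Vertex (shift Y n) m) (i : Fin m) :
    append v w (Fin.natAdd n i) = w i := congrFun (back_append v w) i

lemma sectionAt_apply (g : TreeAut Y) {n : ℕ} (v : Vertex Y n) (m : ℕ)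
    (w : Vertex (shift Y n) m) :
    (sectionAt g v).1 m w = back (g.1 (n + m) (append v w)) := rfl

lemma sectionAt_one {n : ℕ} (v : Vertex Y n) : sectionAt (1 : TreeAut Y) v = 1 := by
  apply treeAut_ext
  intro m w
  show back (append v w) = w
  exact back_append v w

lemma sectionAt_mul (g h : TreeAut Y) {n : ℕ} (v : Vertex Y n) :
    sectionAt (g * h) v = sectionAt g (h.1 n v) * sectionAt h v := by
  apply treeAut_ext
  intro m w
  have h1 : front (h.1 (n + m) (append v w)) = h.1 n v := by
    rw [front_act h n m (append v w), front_append]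
  have h2 : append (h.1 n v) (back (h.1 (n + m) (append v w))) = h.1 (n + m) (append v w) := by
    conv_rhs => rw [← append_front_back (h.1 (n + m) (append v w))]
    rw [h1]
  show back ((g * h).1 (n + m) (append v w))
      = back (g.1 (n + m) (append (h.1 n v) (back (h.1 (n + m) (append v w)))))
  rw [h2]
  rfl

lemma sectionAt_inv (g : TreeAut Y) {n : ℕ} (v : Vertex Y n) :
    sectionAt g⁻¹ v = (sectionAt g ((g⁻¹).1 n v))⁻¹ := by
  have h := sectionAt_mul g g⁻¹ v
  rw [mul_inv_cancel, sectionAt_one] at h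
  exact (inv_eq_of_mul_eq_one_right h.symm).symm

lemma FinUpTo.sectionAt' {j n : ℕ} {g : TreeAut Y} (hg : FinUpTo (n + j) g)
    (v : Vertex Y n) : FinUpTo j (sectionAt g v) := by
  intro m w i hi
  show g.1 (n + m) (append v w) (Fin.natAdd n i) = w i
  rw [hg (n + m) (append v w) (Fin.natAdd n i) (by simp only [Fin.coe_natAdd]; omega)]
  exact append_natAdd v w i

lemma sectionAt_eq_one_of_finUpTo {n : ℕ} {g : TreeAut Y} (hg : FinUpTo n g)
    (v : Vertex Y n) : sectionAt g v = 1 := by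
  apply treeAut_ext
  intro m w
  funext i
  show g.1 (n + m) (append v w) (Fin.natAdd n i) = w i
  rw [hg (n + m) (append v w) (Fin.natAdd n i) (by simp only [Fin.coe_natAdd]; omega)]
  exact append_natAdd v w i

lemma trunc_append {n m : ℕ} (v : Vertex Y n) (w : Vertex (shift Y n) m) (i : ℕ)
    (h1 : i ≤ m) (h2 : n + i ≤ n + m) :
    trunc (append v w) (n + i) h2 = append v (trunc w i h1) := by
  funext j
  refine Fin.addCases (motive := fun j => trunc (append v w) (n + i) h2 j
    = append v (trunc w i h1) j) ?_ ?_ j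
  · intro j'
    exact (append_castAdd v w j').trans (append_castAdd v (trunc w i h1) j').symm
  · intro j'
    exact (append_natAdd v w (Fin.castLE h1 j')).trans
      (append_natAdd v (trunc w i h1) j').symm

lemma sectionAt_ofPortrait [∀ k, Finite (Y k)] (L : ∀ n, Vertex Y n → Equiv.Perm (Y n))
    {n : ℕ} (v : Vertex Y n) :
    sectionAt (ofPortrait L) v
      = ofPortrait (X := shift Y n) (fun m p => L (n + m) (append v p)) := by
  apply treeAut_ext
  intro m w
  funext i
  show portraitAct L (n + m) (append v w) (Fin.natAdd n i)
      = portraitAct (fun m p => L (n + m) (append v p)) m w i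
  rw [portraitAct_letter, portraitAct_letter]
  show L (n + (i : ℕ)) (trunc (append v w) (n + (i : ℕ)) _) (append v w (Fin.natAdd n i))
      = L (n + (i : ℕ)) (append v (trunc w (i : ℕ) _)) (w i)
  rw [trunc_append v w (i : ℕ) (le_of_lt i.isLt), append_natAdd]

section GenericGroup

variable [∀ k, Group (Y k)] [∀ k, Finite (Y k)]

/-- The diagonal automorphism acting letterwise by a family of permutations. -/
noncomputable def diagP (c : ∀ m, Equiv.Perm (Y m)) : TreeAut Y :=
  ofPortrait (fun m _ => c m)

lemma diagP_letter (c : ∀ m, Equiv.Perm (Y m)) (k : ℕ) (w : Vertex Y k) (i : Fin k) :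
    (diagP c).1 k w i = c i (w i) := by
  show portraitAct _ k w i = _
  rw [portraitAct_letter]

lemma diagP_mul (c c' : ∀ m, Equiv.Perm (Y m)) :
    diagP c * diagP c' = diagP (fun m => c m * c' m) := by
  rw [diagP, diagP, diagP, ofPortrait_mul]

lemma diagP_one : diagP (Y := Y) (fun _ => 1) = 1 :=
  ofPortrait_eq_one _ (fun _ _ => rfl)

lemma diagP_inv (c : ∀ m, Equiv.Perm (Y m)) :
    (diagP c)⁻¹ = diagP (fun m => (c m)⁻¹) := by
  apply inv_eq_of_mul_eq_one_right
  rw [diagP_mul]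
  rw [show (fun m => c m * (c m)⁻¹) = fun m : ℕ => (1 : Equiv.Perm (Y m)) from
    funext fun m => mul_inv_cancel (c m)]
  exact diagP_one

/-- The all-ones vertex. -/
def onesV (Y : ℕ → Type u) [∀ k, Group (Y k)] (n : ℕ) : Vertex Y n := fun _ => 1

/-- A spine vertex: all letters trivial except the last one, which is the
designated letter `ξ`. -/
def IsSpineVtx (ξ : ∀ k, Y k) {k : ℕ} (p : Vertex Y k) : Prop :=
  (∀ i : Fin k, (i : ℕ) + 1 < k → p i = 1) ∧ (∀ i : Fin k, (i : ℕ) + 1 = k → p i = ξ i)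

/-- The portrait labels of a spinal automorphism. -/
noncomputable def spinLab (ξ : ∀ k, Y k) (c : ∀ k, Y k) :
    ∀ k, Vertex Y k → Equiv.Perm (Y k) := fun k p =>
  haveI := Classical.propDecidable (0 < k ∧ IsSpineVtx ξ p)
  if 0 < k ∧ IsSpineVtx ξ p then Equiv.mulLeft (c k) else 1

/-- The spinal automorphism with labels `c` along the spine determined by `ξ`. -/
noncomputable def spinA (ξ : ∀ k, Y k) (c : ∀ k, Y k) : TreeAut Y :=
  ofPortrait (spinLab ξ c)

variable {ξ : ∀ k, Y k}

lemma portraitAct_spinLab_fixes (hξ : ∀ k, ξ k ≠ 1) (c : ∀ k, Y k) {k : ℕ}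
    (w : Vertex Y k) (hw : ∀ i : Fin k, (i : ℕ) + 1 < k → w i = 1) :
    portraitAct (spinLab ξ c) k w = w := by
  funext i
  rw [portraitAct_letter]
  rw [spinLab, if_neg]
  · rfl
  rintro ⟨hpos, hsp⟩
  have hj : (i : ℕ) - 1 < (i : ℕ) := by omega
  have h2 := hsp.2 ⟨(i : ℕ) - 1, hj⟩ (by simp only []; omega)
  have h1 : w (Fin.castLE (le_of_lt i.isLt) ⟨(i : ℕ) - 1, hj⟩) = 1 := by
    apply hw
    simp only [Fin.coe_castLE]
    omega
  rw [show trunc w (i : ℕ) (le_of_lt i.isLt) ⟨(i : ℕ) - 1, hj⟩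
      = w (Fin.castLE (le_of_lt i.isLt) ⟨(i : ℕ) - 1, hj⟩) from rfl, h1] at h2
  exact absurd h2.symm (hξ _)

lemma spinA_fixes (hξ : ∀ k, ξ k ≠ 1) (c : ∀ k, Y k) {k : ℕ}
    (w : Vertex Y k) (hw : ∀ i : Fin k, (i : ℕ) + 1 < k → w i = 1) :
    (spinA ξ c).1 k w = w :=
  portraitAct_spinLab_fixes hξ c w hw

lemma isSpineVtx_imp_interior {k : ℕ} {p : Vertex Y k} (h : IsSpineVtx ξ p) :
    ∀ i : Fin k, (i : ℕ) + 1 < k → p i = 1 := h.1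

lemma spinA_mul (hξ : ∀ k, ξ k ≠ 1) (c c' : ∀ k, Y k) :
    spinA ξ c * spinA ξ c' = spinA ξ (fun k => c k * c' k) := by
  rw [spinA, spinA, spinA, ofPortrait_mul]
  refine congrArg ofPortrait (funext fun k => funext fun p => ?_)
  by_cases h : 0 < k ∧ IsSpineVtx ξ p
  · have hfix : portraitAct (spinLab ξ c') k p = p :=
      portraitAct_spinLab_fixes hξ c' p h.2.1
    rw [hfix]
    rw [spinLab, spinLab, spinLab, if_pos h, if_pos h, if_pos h]
    ext x
    show c k * (c' k * x) = (c k * c' k) * x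
    rw [mul_assoc]
  · have h2 : ¬(0 < k ∧ IsSpineVtx ξ (portraitAct (spinLab ξ c') k p)) := by
      rintro ⟨hpos, hsp⟩
      apply h
      refine ⟨hpos, ?_⟩
      have hfix : portraitAct (spinLab ξ c') k (portraitAct (spinLab ξ c') k p)
          = portraitAct (spinLab ξ c') k p :=
        portraitAct_spinLab_fixes hξ c' _ hsp.1
      have := portraitAct_injective (spinLab ξ c') k (hfix)
      rw [← this]
      exact hsp
    rw [spinLab, spinLab, spinLab, if_neg h, if_neg h, if_neg h2]
    rw [one_mul]

lemma spinA_eq_one (c : ∀ k, Y k) (hc : ∀ k, c k = 1) : spinA ξ c = 1 := by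
  apply ofPortrait_eq_one
  intro k p
  rw [spinLab]
  split
  · rw [hc]
    ext x
    show (1 : Y k) * x = x
    rw [one_mul]
  · rfl

/-- The canonical spine vertex at level `k`. -/
noncomputable def spineVtx (ξ : ∀ k, Y k) (k : ℕ) : Vertex Y k := fun i =>
  haveI := Classical.propDecidable ((i : ℕ) + 1 = k)
  if (i : ℕ) + 1 = k then ξ i else 1

lemma isSpineVtx_spineVtx (ξ : ∀ k, Y k) (k : ℕ) : IsSpineVtx ξ (spineVtx ξ k) :=
  ⟨fun i h => by rw [spineVtx, if_neg (by omega)], fun i h => by rw [spineVtx, if_pos h]⟩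

lemma spinA_detect (hξ : ∀ k, ξ k ≠ 1) (c : ∀ k, Y k) (j : ℕ)
    (hfix : ∀ (m : ℕ) (w : Vertex Y m), (∀ i : Fin m, (i : ℕ) < j → w i = 1) →
      (spinA ξ c).1 m w = w) :
    ∀ l, j + 1 ≤ l → c l = 1 := by
  intro l hl
  set w : Vertex Y (l + 1) := Fin.snoc (α := fun i : Fin (l + 1) => Y (i : ℕ))
    (spineVtx ξ l) 1 with hw
  have hgood : ∀ i : Fin (l + 1), (i : ℕ) < j → w i = 1 := by
    intro i hi
    have hne : i ≠ Fin.last l := by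
      intro h
      rw [h] at hi
      simp only [Fin.val_last] at hi
      omega
    obtain ⟨i', rfl⟩ := Fin.exists_castSucc_eq.mpr hne
    show Fin.snoc (α := fun i : Fin (l + 1) => Y (i : ℕ)) (spineVtx ξ l) 1 i'.castSucc = 1
    rw [Fin.snoc_castSucc]
    rw [spineVtx, if_neg]
    simp only [Fin.coe_castSucc] at hi
    omega
  have h1 := congrFun (hfix (l + 1) w hgood) (Fin.last l)
  rw [show (spinA ξ c).1 (l + 1) w (Fin.last l)
      = portraitAct (spinLab ξ c) (l + 1) w (Fin.last l) from rfl] at h1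
  rw [portraitAct_letter] at h1
  have htr : trunc w (((Fin.last l) : Fin (l+1)) : ℕ) (le_of_lt (Fin.last l).isLt)
      = spineVtx ξ l := by
    funext t
    show Fin.snoc (α := fun i : Fin (l + 1) => Y (i : ℕ)) (spineVtx ξ l) 1 t.castSucc
        = spineVtx ξ l t
    rw [Fin.snoc_castSucc]
  have hcond : 0 < (((Fin.last l) : Fin (l+1)) : ℕ) ∧
      IsSpineVtx ξ (trunc w (((Fin.last l) : Fin (l+1)) : ℕ) (le_of_lt (Fin.last l).isLt)) := by
    refine ⟨by simp only [Fin.val_last]; omega, ?_⟩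
    rw [htr]
    exact isSpineVtx_spineVtx ξ l
  rw [spinLab, if_pos hcond] at h1
  have hlast : w (Fin.last l) = 1 := by
    show Fin.snoc (α := fun i : Fin (l + 1) => Y (i : ℕ)) (spineVtx ξ l) 1 (Fin.last l) = 1
    rw [Fin.snoc_last]
  rw [hlast] at h1
  have h2 : c l * 1 = 1 := h1
  rwa [mul_one] at h2

lemma isSpineVtx_append_ones {n m : ℕ} (hm : 0 < m) (p : Vertex (shift Y n) m) :
    IsSpineVtx ξ (append (onesV Y n) p) ↔ IsSpineVtx (Y := shift Y n) (fun k => ξ (n + k)) p := by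
  constructor
  · rintro ⟨h1, h2⟩
    constructor
    · intro j hj
      have := h1 (Fin.natAdd n j) (by show n + (j : ℕ) + 1 < n + m; omega)
      rwa [append_natAdd] at this
    · intro j hj
      have := h2 (Fin.natAdd n j) (by show n + (j : ℕ) + 1 = n + m; omega)
      rwa [append_natAdd] at this
  · rintro ⟨h1, h2⟩
    constructor
    · intro i
      refine Fin.addCases (motive := fun i => ((i : ℕ) + 1 < n + m →
        append (onesV Y n) p i = 1)) ?_ ?_ i
      · intro j _hj
        exact append_castAdd (onesV Y n) p j
      · intro j hj
        rw [append_natAdd]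
        apply h1
        have h3 : n + (j : ℕ) + 1 < n + m := hj
        show (j : ℕ) + 1 < m
        omega
    · intro i
      refine Fin.addCases (motive := fun i => ((i : ℕ) + 1 = n + m →
        append (onesV Y n) p i = ξ i)) ?_ ?_ i
      · intro j hj
        exfalso
        have h3 : (j : ℕ) + 1 = n + m := hj
        have := j.isLt
        omega
      · intro j hj
        rw [append_natAdd]
        have h3 : n + (j : ℕ) + 1 = n + m := hj
        exact h2 j (by show (j : ℕ) + 1 = m; omega)

lemma spinLab_append_ones (hξ : ∀ k, ξ k ≠ 1) (c : ∀ k, Y k) (n m : ℕ)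
    (p : Vertex (shift Y n) m) :
    spinLab ξ c (n + m) (append (onesV Y n) p)
      = spinLab (Y := shift Y n) (fun k => ξ (n + k)) (fun k => c (n + k)) m p := by
  rcases Nat.eq_zero_or_pos m with hm | hm
  · subst hm
    rw [spinLab, spinLab, if_neg, if_neg]
    · rintro ⟨h0, -⟩
      exact absurd h0 (lt_irrefl 0)
    · rintro ⟨hpos, hsp⟩
      have hn : 0 < n := by omega
      have hlt : n - 1 < n := by omega
      have := hsp.2 (Fin.castAdd 0 ⟨n - 1, hlt⟩) (by show (n - 1) + 1 = n + 0; omega)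
      rw [append_castAdd] at this
      exact absurd this.symm (hξ _)
  · rw [spinLab, spinLab]
    by_cases hc : 0 < n + m ∧ IsSpineVtx ξ (append (onesV Y n) p)
    · rw [if_pos hc, if_pos (show 0 < m ∧ IsSpineVtx (Y := shift Y n) (fun k => ξ (n + k)) p
        from ⟨hm, (isSpineVtx_append_ones hm p).mp hc.2⟩)]
    · rw [if_neg hc, if_neg (show ¬(0 < m ∧ IsSpineVtx (Y := shift Y n) (fun k => ξ (n + k)) p)
        from fun h => hc ⟨by omega, (isSpineVtx_append_ones hm p).mpr h.2⟩)]

lemma spinA_section_ones (hξ : ∀ k, ξ k ≠ 1) (c : ∀ k, Y k) (n : ℕ) :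
    sectionAt (spinA ξ c) (onesV Y n)
      = spinA (Y := shift Y n) (fun k => ξ (n + k)) (fun k => c (n + k)) := by
  rw [spinA, sectionAt_ofPortrait, spinA]
  exact congrArg ofPortrait (funext fun m => funext fun p => spinLab_append_ones hξ c n m p)

lemma spinA_section_off (hξ : ∀ k, ξ k ≠ 1) (c : ∀ k, Y k) {n : ℕ}
    (v : Vertex Y n) (hv : v ≠ onesV Y n) :
    FinUpTo 1 (sectionAt (spinA ξ c) v) := by
  rw [spinA, sectionAt_ofPortrait]
  apply finUpTo_ofPortrait
  intro m p hm
  rw [spinLab, if_neg]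
  rintro ⟨-, hsp⟩
  apply hv
  funext i
  have := hsp.1 (Fin.castAdd m i) (by show (i : ℕ) + 1 < n + m; omega)
  rw [append_castAdd] at this
  exact this

end GenericGroup

section Insertion

lemma front_init {n m : ℕ} (w : Vertex Y (n + (m + 1))) :
    front (Fin.init (n := n + m) w) = front w := by
  funext i
  rfl

lemma back_init {n m : ℕ} (w : Vertex Y (n + (m + 1))) :
    back (Fin.init (n := n + m) w) = Fin.init (back w) := by
  funext j
  rfl

variable {n : ℕ}

/-- The level permutations of the insertion of `s` at `v`. -/
noncomputable def insQ (v : Vertex Y n) (s : TreeAut (shift Y n)) (m : ℕ) :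
    Equiv.Perm (Vertex Y (n + m)) where
  toFun w :=
    haveI := Classical.propDecidable (front w = v)
    if front w = v then append v (s.1 m (back w)) else w
  invFun w :=
    haveI := Classical.propDecidable (front w = v)
    if front w = v then append v ((s⁻¹).1 m (back w)) else w
  left_inv := by
    intro w
    beta_reduce
    haveI := Classical.propDecidable (front w = v)
    by_cases h : front w = v
    · rw [if_pos h, if_pos (show front (append v (s.1 m (back w))) = v from front_append v _),
        back_append, coe_inv_apply, Equiv.Perm.inv_def, Equiv.symm_apply_apply]
      rw [← h]
      exact append_front_back w
    · rw [if_neg h, if_neg h]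
  right_inv := by
    intro w
    beta_reduce
    haveI := Classical.propDecidable (front w = v)
    by_cases h : front w = v
    · rw [if_pos h, if_pos (show front (append v ((s⁻¹).1 m (back w))) = v from front_append v _),
        back_append, coe_inv_apply, Equiv.Perm.inv_def, Equiv.apply_symm_apply]
      rw [← h]
      exact append_front_back w
    · rw [if_neg h, if_neg h]

lemma insQ_pos (v : Vertex Y n) (s : TreeAut (shift Y n)) (m : ℕ) (w : Vertex Y (n + m))
    (h : front w = v) : insQ v s m w = append v (s.1 m (back w)) := if_pos h

lemma insQ_neg (v : Vertex Y n) (s : TreeAut (shift Y n)) (m : ℕ) (w : Vertex Y (n + m))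
    (h : ¬ front w = v) : insQ v s m w = w := if_neg h

lemma insQ_zero (v : Vertex Y n) (s : TreeAut (shift Y n)) (w : Vertex Y (n + 0)) :
    insQ v s 0 w = w := by
  haveI := Classical.propDecidable (front w = v)
  by_cases h : front w = v
  · rw [insQ_pos v s 0 w h]
    have hs : s.1 0 (back w) = back w := by
      funext j
      exact j.elim0
    rw [hs, ← h]
    exact append_front_back w
  · exact insQ_neg v s 0 w h

/-- The level permutations of the insertion, at every level. -/
noncomputable def insP (v : Vertex Y n) (s : TreeAut (shift Y n)) :
    ∀ k, Equiv.Perm (Vertex Y k) := fun k =>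
  if h : n ≤ k then
    ((Equiv.cast (congrArg (Vertex Y) (Nat.add_sub_cancel' h))).symm.trans
      (insQ v s (k - n))).trans (Equiv.cast (congrArg (Vertex Y) (Nat.add_sub_cancel' h)))
  else 1

lemma insP_apply (v : Vertex Y n) (s : TreeAut (shift Y n)) (m : ℕ) (w : Vertex Y (n + m)) :
    insP v s (n + m) w = insQ v s m w := by
  have key : ∀ (d : ℕ) (hd : d = m) (pf : n + d = n + m),
      (((Equiv.cast (congrArg (Vertex Y) pf)).symm.trans (insQ v s d)).trans
        (Equiv.cast (congrArg (Vertex Y) pf))) w = insQ v s m w := by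
    intro d hd pf
    subst hd
    rfl
  unfold insP
  rw [dif_pos (Nat.le_add_right n m)]
  exact key (n + m - n) (by omega) (Nat.add_sub_cancel' (Nat.le_add_right n m))

lemma insP_low (v : Vertex Y n) (s : TreeAut (shift Y n)) (k : ℕ) (hk : k < n) :
    insP v s k = 1 := by
  show (if h : n ≤ k then _ else _) = 1
  rw [dif_neg (by omega)]

lemma insP_at_n (v : Vertex Y n) (s : TreeAut (shift Y n)) (w : Vertex Y n) :
    insP v s n w = w := by
  have h := insP_apply v s 0 w
  rw [insQ_zero] at h
  exact h

/-- The insertion `ins_v(s)` of an automorphism of the shifted tree at vertex `v`. -/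
noncomputable def insT (v : Vertex Y n) (s : TreeAut (shift Y n)) : TreeAut Y := by
  refine ⟨insP v s, ?_⟩
  intro k w
  rcases lt_or_ge k n with hk | hk
  · rcases Nat.lt_or_ge (k + 1) n with hk1 | hk1
    · rw [insP_low v s (k + 1) hk1, insP_low v s k hk]
      rfl
    · have hn : n = k + 1 := by omega
      subst hn
      rw [insP_at_n, insP_low v s k hk]
      rfl
  · obtain ⟨m, rfl⟩ := Nat.exists_eq_add_of_le hk
    rw [show insP v s (n + m + 1) w = insQ (n := n) v s (m + 1) w from insP_apply v s (m + 1) w,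
      show insP v s (n + m) (Fin.init w) = insQ (n := n) v s m (Fin.init w) from
        insP_apply v s m (Fin.init w)]
    haveI := Classical.propDecidable (front (n := n) (m := m + 1) w = v)
    by_cases h : front (n := n) (m := m + 1) w = v
    · rw [insQ_pos (n := n) v s (m + 1) w h,
        insQ_pos (n := n) v s m (Fin.init w) ((front_init (n := n) (m := m) w).trans h)]
      rw [init_append, s.compat m (back w), back_init]
    · rw [insQ_neg (n := n) v s (m + 1) w h,
        insQ_neg (n := n) v s m (Fin.init w)
          (fun hc => h ((front_init (n := n) (m := m) w).symm.trans hc))]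

lemma insT_apply (v : Vertex Y n) (s : TreeAut (shift Y n)) (m : ℕ) (w : Vertex Y (n + m)) :
    (insT v s).1 (n + m) w = insQ v s m w := insP_apply v s m w

lemma insT_low (v : Vertex Y n) (s : TreeAut (shift Y n)) (k : ℕ) (hk : k < n)
    (w : Vertex Y k) : (insT v s).1 k w = w := by
  show insP v s k w = w
  rw [insP_low v s k hk]
  rfl

lemma insT_fixesOutside (v : Vertex Y n) (s : TreeAut (shift Y n)) :
    FixesOutside (insT v s) v := by
  intro k w hw
  rcases lt_or_ge k n with hk | hk
  · exact insT_low v s k hk w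
  · obtain ⟨m, rfl⟩ := Nat.exists_eq_add_of_le hk
    rw [show (insT v s).1 (n + m) w = insQ v s m w from insT_apply v s m w]
    refine insQ_neg v s m w (fun hfr => hw ?_)
    refine ⟨Nat.le_add_right n m, fun i => ?_⟩
    rw [← hfr]
    rfl

lemma sectionAt_insT (v : Vertex Y n) (s : TreeAut (shift Y n)) :
    sectionAt (insT v s) v = s := by
  apply treeAut_ext
  intro m w
  show back ((insT v s).1 (n + m) (append v w)) = s.1 m w
  rw [insT_apply, insQ_pos v s m _ (front_append v w), back_append, back_append]

lemma insT_mul (v : Vertex Y n) (s₁ s₂ : TreeAut (shift Y n)) :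
    insT v (s₁ * s₂) = insT v s₁ * insT v s₂ := by
  apply treeAut_ext
  intro k w
  rw [treeAut_mul_apply]
  rcases lt_or_ge k n with hk | hk
  · rw [insT_low v _ k hk, insT_low v _ k hk, insT_low v _ k hk]
  · obtain ⟨m, rfl⟩ := Nat.exists_eq_add_of_le hk
    haveI := Classical.propDecidable (front (n := n) (m := m) w = v)
    by_cases h : front (n := n) (m := m) w = v
    · have h2 : (insT v s₂).1 (n + m) w = append v (s₂.1 m (back w)) := by
        rw [insT_apply]
        exact insQ_pos (n := n) v s₂ m w h
      have h1 : (insT v s₁).1 (n + m) (append v (s₂.1 m (back w)))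
          = append v (s₁.1 m (s₂.1 m (back w))) := by
        rw [insT_apply, insQ_pos (n := n) v s₁ m _ (front_append v _), back_append]
      have h12 : (insT v (s₁ * s₂)).1 (n + m) w = append v (s₁.1 m (s₂.1 m (back w))) := by
        rw [insT_apply]
        exact insQ_pos (n := n) v (s₁ * s₂) m w h
      rw [h12, h2, h1]
    · have h2 : (insT v s₂).1 (n + m) w = w := by
        rw [insT_apply]
        exact insQ_neg (n := n) v s₂ m w h
      have h1 : (insT v s₁).1 (n + m) w = w := by
        rw [insT_apply]
        exact insQ_neg (n := n) v s₁ m w h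
      have h12 : (insT v (s₁ * s₂)).1 (n + m) w = w := by
        rw [insT_apply]
        exact insQ_neg (n := n) v (s₁ * s₂) m w h
      rw [h12, h2, h1]

lemma insT_one (v : Vertex Y n) : insT v (1 : TreeAut (shift Y n)) = 1 := by
  apply treeAut_ext
  intro k w
  rcases lt_or_ge k n with hk | hk
  · rw [insT_low v _ k hk]
    rfl
  · obtain ⟨m, rfl⟩ := Nat.exists_eq_add_of_le hk
    rw [insT_apply]
    haveI := Classical.propDecidable (front w = v)
    by_cases h : front w = v
    · rw [insQ_pos v _ m w h]
      show append v (back w) = w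
      rw [← h]
      exact append_front_back w
    · rw [insQ_neg v _ m w h]
      rfl

/-- Insertion at `v` as a group homomorphism. -/
noncomputable def insVh (v : Vertex Y n) : TreeAut (shift Y n) →* TreeAut Y :=
  MonoidHom.mk' (insT v) (insT_mul v)

lemma finUpTo_insT {j : ℕ} (v : Vertex Y n) {s : TreeAut (shift Y n)}
    (hs : FinUpTo j s) : FinUpTo (n + j) (insT v s) := by
  intro k w i hi
  rcases lt_or_ge k n with hk | hk
  · rw [insT_low v s k hk]
  · obtain ⟨m, rfl⟩ := Nat.exists_eq_add_of_le hk
    rw [insT_apply]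
    haveI := Classical.propDecidable (front w = v)
    by_cases h : front w = v
    · rw [insQ_pos v s m w h]
      have hin : n ≤ (i : ℕ) := by omega
      have heq : i = Fin.natAdd n ⟨(i : ℕ) - n, by omega⟩ := Fin.ext (by
        show (i : ℕ) = n + ((i : ℕ) - n)
        omega)
      rw [heq, append_natAdd]
      rw [hs m (back w) _ (by show j ≤ (i : ℕ) - n; omega)]
      rfl
    · rw [insQ_neg v s m w h]

end Insertion

section Trans

variable [∀ k, Group (Y k)] [∀ k, Finite (Y k)]

/-- The finitary diagonal translation carrying `v₀` to `v` at level `n`. -/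
noncomputable def transD {n : ℕ} (v₀ v : Vertex Y n) : TreeAut Y :=
  diagP (fun m => if h : m < n then Equiv.mulLeft (v ⟨m, h⟩ * (v₀ ⟨m, h⟩)⁻¹) else 1)

lemma transD_finUpTo {n : ℕ} (v₀ v : Vertex Y n) : FinUpTo n (transD v₀ v) := by
  intro k x i hi
  rw [transD, diagP_letter, dif_neg (by omega)]
  rfl

lemma transD_letter {n : ℕ} (v₀ v : Vertex Y n) (k : ℕ) (x : Vertex Y k) (i : Fin k)
    (hi : (i : ℕ) < n) :
    (transD v₀ v).1 k x i = v ⟨(i : ℕ), hi⟩ * (v₀ ⟨(i : ℕ), hi⟩)⁻¹ * x i := by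
  rw [transD, diagP_letter, dif_pos hi]
  rfl

lemma transD_maps {n : ℕ} (v₀ v : Vertex Y n) : (transD v₀ v).1 n v₀ = v := by
  funext i
  rw [transD_letter v₀ v n v₀ i i.isLt]
  show v i * (v₀ i)⁻¹ * v₀ i = v i
  rw [inv_mul_cancel_right]

lemma insT_conj {n : ℕ} (v₀ v : Vertex Y n) (s : TreeAut (shift Y n)) :
    insT v s = transD v₀ v * insT v₀ s * (transD v₀ v)⁻¹ := by
  apply treeAut_ext
  intro k w
  rw [treeAut_mul_apply, treeAut_mul_apply]
  rcases lt_or_ge k n with hk | hk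
  · rw [insT_low v s k hk, insT_low v₀ s k hk]
    rw [show (transD v₀ v).1 k (((transD v₀ v)⁻¹).1 k w) = w from by
      rw [coe_inv_apply]; exact ((transD v₀ v).1 k).apply_symm_apply w]
  · obtain ⟨m, rfl⟩ := Nat.exists_eq_add_of_le hk
    set τ := transD v₀ v with hτdef
    set w' := (τ⁻¹).1 (n + m) w with hw'
    have hww : τ.1 (n + m) w' = w := by
      rw [hw', coe_inv_apply]
      exact (τ.1 (n + m)).apply_symm_apply w
    have hback : back (n := n) (m := m) w' = back (n := n) (m := m) w := by
      funext j
      show (τ⁻¹).1 (n + m) w (Fin.natAdd n j) = w (Fin.natAdd n j)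
      exact (transD_finUpTo v₀ v).inv (n + m) w (Fin.natAdd n j)
        (by show n ≤ n + (j : ℕ); omega)
    have hfront : front (n := n) (m := m) w = v ↔ front (n := n) (m := m) w' = v₀ := by
      constructor
      · intro hf
        funext j
        have hl := transD_letter v₀ v (n + m) w' (Fin.castAdd m j)
          (by show (j : ℕ) < n; exact j.isLt)
        rw [hww] at hl
        have hfj : w (Fin.castAdd m j) = v j := congrFun hf j
        rw [hfj] at hl
        have hlt : ((Fin.castAdd m j : Fin (n + m)) : ℕ) < n := j.isLt
        have h2 : v ⟨_, hlt⟩ * (v₀ ⟨_, hlt⟩)⁻¹ * v₀ ⟨_, hlt⟩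
            = v ⟨_, hlt⟩ * (v₀ ⟨_, hlt⟩)⁻¹ * w' (Fin.castAdd m j) := by
          rw [inv_mul_cancel_right]
          exact hl
        exact (mul_left_cancel h2).symm
      · intro hf
        funext j
        have hl := transD_letter v₀ v (n + m) w' (Fin.castAdd m j)
          (by show (j : ℕ) < n; exact j.isLt)
        rw [hww] at hl
        have hfj : w' (Fin.castAdd m j) = v₀ j := congrFun hf j
        rw [hfj] at hl
        have hlt : ((Fin.castAdd m j : Fin (n + m)) : ℕ) < n := j.isLt
        show w (Fin.castAdd m j) = v ⟨_, hlt⟩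
        rw [hl]
        show v ⟨_, hlt⟩ * (v₀ ⟨_, hlt⟩)⁻¹ * v₀ ⟨_, hlt⟩ = v ⟨_, hlt⟩
        rw [inv_mul_cancel_right]
    haveI := Classical.propDecidable (front (n := n) (m := m) w = v)
    by_cases h : front (n := n) (m := m) w = v
    · rw [show (insT v s).1 (n + m) w = insQ (n := n) v s m w from insT_apply v s m w,
        insQ_pos (n := n) v s m w h,
        show (insT v₀ s).1 (n + m) w' = insQ (n := n) v₀ s m w' from insT_apply v₀ s m w',
        insQ_pos (n := n) v₀ s m w' (hfront.mp h), hback]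
      funext i
      refine Fin.addCases (motive := fun i => append v (s.1 m (back w)) i
        = τ.1 (n + m) (append v₀ (s.1 m (back w))) i) ?_ ?_ i
      · intro j
        rw [transD_letter v₀ v (n + m) _ (Fin.castAdd m j) (by show (j : ℕ) < n; exact j.isLt)]
        rw [append_castAdd, append_castAdd]
        show v ⟨(j : ℕ), j.isLt⟩
            = v ⟨(j : ℕ), j.isLt⟩ * (v₀ ⟨(j : ℕ), j.isLt⟩)⁻¹ * v₀ ⟨(j : ℕ), j.isLt⟩
        rw [inv_mul_cancel_right]
      · intro j
        rw [append_natAdd,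
          transD_finUpTo v₀ v (n + m) _ (Fin.natAdd n j) (by show n ≤ n + (j : ℕ); omega),
          append_natAdd]
    · rw [show (insT v s).1 (n + m) w = insQ (n := n) v s m w from insT_apply v s m w,
        insQ_neg (n := n) v s m w h,
        show (insT v₀ s).1 (n + m) w' = insQ (n := n) v₀ s m w' from insT_apply v₀ s m w',
        insQ_neg (n := n) v₀ s m w' (fun hc => h (hfront.mpr hc)), hww]

end Trans

section Decomp

variable [∀ k, Group (Y k)] [∀ k, Finite (Y k)] {ξ : ∀ k, Y k}

lemma letters_one_of_front_ones {n m : ℕ} {w : Vertex Y (n + m)}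
    (hf : front (n := n) (m := m) w = onesV Y n) (i : Fin (n + m)) (hi : (i : ℕ) < n) :
    w i = 1 :=
  congrFun hf ⟨(i : ℕ), hi⟩

lemma front_ones_of_letters {n m : ℕ} {w : Vertex Y (n + m)}
    (h : ∀ i : Fin (n + m), (i : ℕ) < n → w i = 1) :
    front (n := n) (m := m) w = onesV Y n := by
  funext t
  exact h (Fin.castAdd m t) (by show (t : ℕ) < n; exact t.isLt)

lemma spinLab_eq_one_of_ones (hξ : ∀ k, ξ k ≠ 1) (c : ∀ k, Y k) {k : ℕ} (p : Vertex Y k)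
    (hp : ∀ t, p t = 1) : spinLab ξ c k p = 1 := by
  rw [spinLab, if_neg]
  rintro ⟨hpos, hsp⟩
  have hlt : k - 1 < k := by omega
  have := hsp.2 ⟨k - 1, hlt⟩ (by show (k - 1) + 1 = k; omega)
  rw [hp] at this
  exact absurd this.symm (hξ _)

lemma trunc_high_of_front_ones {n m : ℕ} {w : Vertex Y (n + m)}
    (hf : front (n := n) (m := m) w = onesV Y n) (j : ℕ) (hj : j ≤ m)
    (h2 : n + j ≤ n + m) :
    trunc w (n + j) h2 = append (onesV Y n) (trunc (back w) j hj) := by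
  funext t
  refine Fin.addCases (motive := fun t => trunc w (n + j) h2 t
    = append (onesV Y n) (trunc (back w) j hj) t) ?_ ?_ t
  · intro t'
    have h1 : w (Fin.castAdd m t') = onesV Y n t' :=
      letters_one_of_front_ones hf (Fin.castAdd m t') (by show (t' : ℕ) < n; exact t'.isLt)
    exact h1.trans (append_castAdd (onesV Y n) (trunc (back w) j hj) t').symm
  · intro t'
    exact (show w (Fin.castLE h2 (Fin.natAdd n t')) = back w (Fin.castLE hj t') from rfl).trans
      (append_natAdd (onesV Y n) (trunc (back w) j hj) t').symm

/-- The low part of a spinal automorphism (labels at levels `≤ n` only). -/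
noncomputable def lowLab (ξ : ∀ k, Y k) (c : ∀ k, Y k) (n : ℕ) :
    ∀ k, Vertex Y k → Equiv.Perm (Y k) := fun k p =>
  haveI := Classical.propDecidable (k ≤ n)
  if k ≤ n then spinLab ξ c k p else 1

lemma lowLab_finUpTo (c : ∀ k, Y k) (n : ℕ) :
    FinUpTo (n + 1) (ofPortrait (lowLab ξ c n)) := by
  apply finUpTo_ofPortrait
  intro k p hk
  rw [lowLab, if_neg (by omega)]

/-- Decomposition of a spinal automorphism into its insertion at `1^n` times its
finitary low part. -/
lemma spinA_decomp (hξ : ∀ k, ξ k ≠ 1) (c : ∀ k, Y k) (n : ℕ) :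
    spinA ξ c
      = insT (onesV Y n)
          (spinA (Y := shift Y n) (fun k => ξ (n + k)) (fun k => c (n + k)))
        * ofPortrait (lowLab ξ c n) := by
  set sp' := spinA (Y := shift Y n) (fun k => ξ (n + k)) (fun k => c (n + k)) with hsp'
  apply treeAut_ext
  intro k w
  rw [treeAut_mul_apply]
  set corrw := (ofPortrait (lowLab ξ c n)).1 k w with hcorrw
  have hcw : ∀ i : Fin k,
      corrw i = lowLab ξ c n i (trunc w i (le_of_lt i.isLt)) (w i) := by
    intro i
    rw [hcorrw]
    exact portraitAct_letter _ k w i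
  have hsw : ∀ i : Fin k,
      (spinA ξ c).1 k w i = spinLab ξ c i (trunc w i (le_of_lt i.isLt)) (w i) := by
    intro i
    exact portraitAct_letter _ k w i
  have hcw2 : ∀ i : Fin k, (∀ t, trunc w (i : ℕ) (le_of_lt i.isLt) t = 1) → corrw i = w i := by
    intro i ht
    rw [hcw i]
    haveI := Classical.propDecidable ((i : ℕ) ≤ n)
    by_cases hin : (i : ℕ) ≤ n
    · rw [lowLab, if_pos hin, spinLab_eq_one_of_ones hξ c _ ht]
      rfl
    · rw [lowLab, if_neg hin]
      rfl
  have hcw3 : ∀ i : Fin k, n < (i : ℕ) → corrw i = w i := by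
    intro i hin
    rw [hcw i, lowLab, if_neg (by omega)]
    rfl
  rcases le_or_gt k n with hk | hk
  · have hins : (insT (onesV Y n) sp').1 k corrw = corrw := by
      rcases lt_or_eq_of_le hk with h | h
      · exact insT_low _ _ k h corrw
      · subst h
        exact insP_at_n _ _ corrw
    rw [hins]
    funext i
    rw [hsw i, hcw i, lowLab, if_pos (show (i : ℕ) ≤ n by omega)]
  · obtain ⟨m, rfl⟩ := Nat.exists_eq_add_of_lt hk
    haveI := Classical.propDecidable (front (n := n) (m := m + 1) w = onesV Y n)
    by_cases hf : front (n := n) (m := m + 1) w = onesV Y n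
    · -- the low correction fixes w, and the insertion acts by the shifted spine
      have hA : ∀ i : Fin (n + (m + 1)), (i : ℕ) < n → w i = 1 :=
        fun i hi => letters_one_of_front_ones hf i hi
      have hcweq : corrw = w := by
        funext i
        rcases le_or_gt (i : ℕ) n with hin | hin
        · refine hcw2 i (fun t => ?_)
          exact hA (Fin.castLE (le_of_lt i.isLt) t) (by show (t : ℕ) < n; omega)
        · exact hcw3 i hin
      rw [hcweq]
      rw [show (insT (onesV Y n) sp').1 (n + m + 1) w
          = insQ (n := n) (onesV Y n) sp' (m + 1) w from insT_apply (onesV Y n) sp' (m + 1) w,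
        insQ_pos (n := n) (onesV Y n) sp' (m + 1) w hf]
      funext i
      refine Fin.addCases (motive := fun i => (spinA ξ c).1 (n + (m + 1)) w i
        = append (onesV Y n) (sp'.1 (m + 1) (back (n := n) (m := m + 1) w)) i) ?_ ?_ i
      · intro j
        have e2 : spinLab ξ c ((Fin.castAdd (m + 1) j : Fin (n + (m + 1))) : ℕ)
            (trunc w ((Fin.castAdd (m + 1) j : Fin (n + (m + 1))) : ℕ)
              (le_of_lt (Fin.castAdd (m + 1) j).isLt)) = 1 :=
          spinLab_eq_one_of_ones hξ c _ (fun t =>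
            hA (Fin.castLE (le_of_lt (Fin.castAdd (m + 1) j).isLt) t) (by
              show (t : ℕ) < n
              have h1 := t.isLt
              have h2 : (j : ℕ) < n := j.isLt
              have h3 : ((Fin.castAdd (m + 1) j : Fin (n + (m + 1))) : ℕ) = (j : ℕ) := rfl
              omega))
        calc (spinA ξ c).1 (n + (m + 1)) w (Fin.castAdd (m + 1) j)
            = spinLab ξ c ((Fin.castAdd (m + 1) j : Fin (n + (m + 1))) : ℕ)
                (trunc w ((Fin.castAdd (m + 1) j : Fin (n + (m + 1))) : ℕ)
                  (le_of_lt (Fin.castAdd (m + 1) j).isLt)) (w (Fin.castAdd (m + 1) j)) :=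
              portraitAct_letter (spinLab ξ c) (n + (m + 1)) w (Fin.castAdd (m + 1) j)
          _ = w (Fin.castAdd (m + 1) j) := by rw [e2]; rfl
          _ = 1 := hA (Fin.castAdd (m + 1) j) (by show (j : ℕ) < n; exact j.isLt)
          _ = append (onesV Y n) (sp'.1 (m + 1) (back (n := n) (m := m + 1) w))
                (Fin.castAdd (m + 1) j) :=
              (append_castAdd (onesV Y n) (sp'.1 (m + 1) (back (n := n) (m := m + 1) w)) j).symm
      · intro j
        have htr : trunc w ((Fin.natAdd n j : Fin (n + (m + 1))) : ℕ)
              (le_of_lt (Fin.natAdd n j).isLt)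
            = append (onesV Y n) (trunc (back (n := n) (m := m + 1) w) (j : ℕ) (le_of_lt j.isLt)) :=
          trunc_high_of_front_ones hf (j : ℕ) (le_of_lt j.isLt) _
        have e2 := spinLab_append_ones (ξ := ξ) hξ c n (j : ℕ)
          (trunc (back (n := n) (m := m + 1) w) (j : ℕ) (le_of_lt j.isLt))
        have e3 : sp'.1 (m + 1) (back (n := n) (m := m + 1) w) j
            = spinLab (Y := shift Y n) (fun t => ξ (n + t)) (fun t => c (n + t)) ((j : Fin (m+1)) : ℕ)
              (trunc (back (n := n) (m := m + 1) w) ((j : Fin (m+1)) : ℕ) (le_of_lt j.isLt)) (back (n := n) (m := m + 1) w j) :=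
          portraitAct_letter _ (m + 1) (back (n := n) (m := m + 1) w) j
        calc (spinA ξ c).1 (n + (m + 1)) w (Fin.natAdd n j)
            = spinLab ξ c ((Fin.natAdd n j : Fin (n + (m + 1))) : ℕ)
                (trunc w ((Fin.natAdd n j : Fin (n + (m + 1))) : ℕ)
                  (le_of_lt (Fin.natAdd n j).isLt)) (w (Fin.natAdd n j)) :=
              portraitAct_letter (spinLab ξ c) (n + (m + 1)) w (Fin.natAdd n j)
          _ = spinLab ξ c (n + (j : ℕ))
                (append (onesV Y n) (trunc (back (n := n) (m := m + 1) w) (j : ℕ) (le_of_lt j.isLt)))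
                (back (n := n) (m := m + 1) w j) := by rw [htr]; rfl
          _ = spinLab (Y := shift Y n) (fun t => ξ (n + t)) (fun t => c (n + t)) (j : ℕ)
                (trunc (back (n := n) (m := m + 1) w) (j : ℕ) (le_of_lt j.isLt)) (back (n := n) (m := m + 1) w j) := by rw [e2]
          _ = sp'.1 (m + 1) (back (n := n) (m := m + 1) w) j := e3.symm
          _ = append (onesV Y n) (sp'.1 (m + 1) (back (n := n) (m := m + 1) w))
                (Fin.natAdd n j) :=
              (append_natAdd (onesV Y n) (sp'.1 (m + 1) (back (n := n) (m := m + 1) w)) j).symm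
    · -- the insertion does nothing
      have hfc : ¬ front (n := n) (m := m + 1) corrw = onesV Y n := by
        intro hone
        apply hf
        apply front_ones_of_letters
        have key : ∀ d, d ≤ n → ∀ i : Fin (n + (m + 1)), (i : ℕ) < d → w i = 1 := by
          intro d
          induction d with
          | zero => intro _ i hi; omega
          | succ d ih =>
              intro hd i hi
              rcases Nat.lt_or_ge (i : ℕ) d with h | h
              · exact ih (by omega) i h
              · have htro : ∀ t, trunc w (i : ℕ) (le_of_lt i.isLt) t = 1 := by
                  intro t
                  exact ih (by omega) (Fin.castLE (le_of_lt i.isLt) t)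
                    (by show (t : ℕ) < d; have := t.isLt; omega)
                have hc1 : corrw i = w i := hcw2 i htro
                have hc2 : corrw i = 1 :=
                  letters_one_of_front_ones hone i (by omega)
                rw [← hc1, hc2]
        exact fun i hi => key n le_rfl i hi
      rw [show (insT (onesV Y n) sp').1 (n + m + 1) corrw
          = insQ (n := n) (onesV Y n) sp' (m + 1) corrw
          from insT_apply (onesV Y n) sp' (m + 1) corrw,
        insQ_neg (n := n) (onesV Y n) sp' (m + 1) corrw hfc]
      funext i
      rw [hsw i, hcw i]
      haveI := Classical.propDecidable ((i : ℕ) ≤ n)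
      by_cases hin : (i : ℕ) ≤ n
      · rw [lowLab, if_pos hin]
      · rw [lowLab, if_neg hin]
        have hno : ¬(0 < (i : ℕ) ∧ IsSpineVtx ξ (trunc w (i : ℕ) (le_of_lt i.isLt))) := by
          rintro ⟨hpos, hsp⟩
          apply hf
          apply front_ones_of_letters
          intro t ht
          exact hsp.1 ⟨(t : ℕ), by omega⟩ (by show (t : ℕ) + 1 < (i : ℕ); omega)
        rw [spinLab, if_neg hno]

lemma spinLab_eq_one_of_interior (c : ∀ k, Y k) {k : ℕ} (p : Vertex Y k) (t : Fin k)
    (ht : (t : ℕ) + 1 < k) (hp : p t ≠ 1) : spinLab ξ c k p = 1 := by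
  rw [spinLab, if_neg]
  rintro ⟨-, hsp⟩
  exact hp (hsp.1 t ht)

/-- Rigid along the ray: the automorphism fixes everything whose first `j` letters
are trivial, for some `j`. -/
def RayR (r : TreeAut Y) : Prop :=
  ∃ j, ∀ (m : ℕ) (w : Vertex Y m), (∀ i : Fin m, (i : ℕ) < j → w i = 1) → r.1 m w = w

lemma rayR_one : RayR (1 : TreeAut Y) := ⟨0, fun _ _ _ => rfl⟩

lemma RayR.mul {a b : TreeAut Y} (ha : RayR a) (hb : RayR b) : RayR (a * b) := by
  obtain ⟨ja, hja⟩ := ha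
  obtain ⟨jb, hjb⟩ := hb
  refine ⟨max ja jb, fun m w hw => ?_⟩
  rw [treeAut_mul_apply, hjb m w (fun i hi => hw i (by omega)),
    hja m w (fun i hi => hw i (by omega))]

lemma RayR.inv {a : TreeAut Y} (ha : RayR a) : RayR a⁻¹ := by
  obtain ⟨ja, hja⟩ := ha
  refine ⟨ja, fun m w hw => ?_⟩
  rw [coe_inv_apply]
  conv_lhs => rw [← hja m w hw]
  exact (a.1 m).symm_apply_apply _

lemma spinA_good_letters (hξ : ∀ k, ξ k ≠ 1) (c : ∀ k, Y k) {m j : ℕ} (w : Vertex Y m)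
    (hw : ∀ i : Fin m, (i : ℕ) < j → w i = 1) (i : Fin m) (hi : (i : ℕ) < j) :
    (spinA ξ c).1 m w i = w i := by
  rw [show (spinA ξ c).1 m w i = _ from portraitAct_letter (spinLab ξ c) m w i,
    spinLab_eq_one_of_ones hξ c (trunc w (i : ℕ) (le_of_lt i.isLt))
      (fun t => hw (Fin.castLE (le_of_lt i.isLt) t) (by
        show (t : ℕ) < j
        have := t.isLt
        omega))]
  rfl

lemma RayR.conj {r : TreeAut Y} (hr : RayR r) (hξ : ∀ k, ξ k ≠ 1) (c : ∀ k, Y k) :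
    RayR ((spinA ξ c)⁻¹ * r * spinA ξ c) := by
  obtain ⟨j, hj⟩ := hr
  refine ⟨j, fun m w hw => ?_⟩
  rw [treeAut_mul_apply, treeAut_mul_apply]
  have hgood1 : ∀ i : Fin m, (i : ℕ) < j → (spinA ξ c).1 m w i = 1 := fun i hi => by
    rw [spinA_good_letters hξ c w hw i hi]
    exact hw i hi
  rw [hj m _ hgood1, coe_inv_apply]
  exact ((spinA ξ c).1 m).symm_apply_apply w

lemma rayR_detect (hξ : ∀ k, ξ k ≠ 1) (c : ∀ k, Y k) (hr : RayR (spinA ξ c)) :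
    ∀ N, ∃ l, N ≤ l ∧ c l = 1 := by
  obtain ⟨j, hj⟩ := hr
  intro N
  exact ⟨max N (j + 1), le_max_left _ _,
    spinA_detect hξ c j hj _ (le_max_right _ _)⟩

end Decomp

end Generic


section Concrete

variable (T : ℕ → Type) [∀ n, Group (T n)] [∀ n, Finite (T n)]

/-- The sequence of alphabets: cumulative products of the `T i` with a `ℤ/2` factor. -/
abbrev AX : ℕ → Type := fun n => (∀ i : Fin (n + 1), T (i : ℕ)) × Multiplicative (ZMod 2)

/-- The designated nontrivial letter in each alphabet. -/
noncomputable def ξA : ∀ n, AX T n := fun _ => (1, Multiplicative.ofAdd 1)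

lemma ξA_ne_one : ∀ n, ξA T n ≠ 1 := by
  intro n h
  have h2 : (Multiplicative.ofAdd (1 : ZMod 2)) = 1 := congrArg Prod.snd h
  have h3 : (1 : ZMod 2) = 0 := congrArg Multiplicative.toAdd h2
  exact absurd h3 (by decide)

lemma two_le_card_AX : ∀ n, 2 ≤ Nat.card (AX T n) := by
  intro n
  rw [Nat.card_prod]
  have h1 : 0 < Nat.card (∀ i : Fin (n + 1), T (i : ℕ)) := Nat.card_pos
  have h2 : Nat.card (Multiplicative (ZMod 2)) = 2 := by
    rw [Nat.card_eq_fintype_card]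
    rfl
  rw [h2]
  omega

variable {H : Type} [Group H] (ψ : H →* ∀ n, T n)

/-- The canonical injection `H → ∏ₙ A n` with no nontrivial eventually-trivial images. -/
noncomputable def φA : H →* ∀ n, AX T n where
  toFun h := fun n => (fun i => ψ h (i : ℕ), 1)
  map_one' := by
    funext n
    refine Prod.ext ?_ rfl
    funext i
    show ψ (1 : H) (i : ℕ) = 1
    rw [ψ.map_one]
    rfl
  map_mul' a b := by
    funext n
    refine Prod.ext ?_ rfl
    funext i
    show ψ (a * b) (i : ℕ) = ψ a (i : ℕ) * ψ b (i : ℕ)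
    rw [ψ.map_mul]
    rfl

lemma φA_eventually (hinj : Function.Injective ψ) (h : H) (N : ℕ)
    (hN : ∀ m, N ≤ m → φA T ψ h m = 1) : h = 1 := by
  apply hinj
  rw [ψ.map_one]
  funext t
  have h1 := hN (max N t) (le_max_left _ _)
  have h2 := congrFun (congrArg Prod.fst h1) ⟨t, by omega⟩
  exact h2

/-- The spinal embedding of `H` into the tree automorphism group. -/
noncomputable def sE : H →* TreeAut (AX T) :=
  MonoidHom.mk' (fun h => spinA (ξA T) (fun k => φA T ψ h k))
    (fun a b => by
      show spinA (ξA T) (fun k => (φA T ψ) (a * b) k)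
          = spinA (ξA T) (fun k => (φA T ψ) a k) * spinA (ξA T) (fun k => (φA T ψ) b k)
      have hc : (fun k => φA T ψ (a * b) k) = fun k => (φA T ψ a k) * (φA T ψ b k) := by
        funext k
        rw [(φA T ψ).map_mul]
        rfl
      rw [hc, ← spinA_mul (ξA_ne_one T)])

lemma sE_injective (hinj : Function.Injective ψ) : Function.Injective (sE T ψ) := by
  intro a b hab
  have h1 : sE T ψ (a * b⁻¹) = 1 := by
    rw [map_mul, map_inv, hab, mul_inv_cancel]
  have h2 : ∀ l, 0 + 1 ≤ l → (fun k => φA T ψ (a * b⁻¹) k) l = 1 := by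
    refine spinA_detect (ξA_ne_one T) _ 0 ?_
    intro m w _
    rw [show spinA (ξA T) (fun k => φA T ψ (a * b⁻¹) k) = sE T ψ (a * b⁻¹) from rfl, h1]
    rfl
  have h3 : a * b⁻¹ = 1 :=
    φA_eventually T ψ hinj (a * b⁻¹) 1 (fun m hm => h2 m (by omega))
  exact mul_inv_eq_one.mp h3

/-- The main subgroup `Λ`. -/
noncomputable def ΛB : Subgroup (TreeAut (AX T)) := finSub (AX T) ⊔ (sE T ψ).range

lemma finSub_le_ΛB : finSub (AX T) ≤ ΛB T ψ := le_sup_left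

lemma range_le_ΛB : (sE T ψ).range ≤ ΛB T ψ := le_sup_right

lemma sE_mem_ΛB (h : H) : sE T ψ h ∈ ΛB T ψ :=
  range_le_ΛB T ψ (MonoidHom.mem_range.mpr ⟨h, rfl⟩)

/-- The embedding of `H` into `Λ`. -/
noncomputable def ιB : H →* ↥(ΛB T ψ) :=
  (sE T ψ).codRestrict (ΛB T ψ) (sE_mem_ΛB T ψ)

lemma ιB_injective (hinj : Function.Injective ψ) : Function.Injective (ιB T ψ) := by
  intro a b hab
  exact sE_injective T ψ hinj (congrArg Subtype.val hab)

lemma sph_ΛB : SphericallyTransitive (ΛB T ψ) := by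
  intro n v w
  exact ⟨transD v w, finSub_le_ΛB T ψ ⟨n, transD_finUpTo v w⟩, transD_maps v w⟩

/-- The automorphisms of the shifted tree all of whose insertions lie in `Λ`. -/
noncomputable def SecOK (n : ℕ) : Subgroup (TreeAut (shift (AX T) n)) :=
  ⨅ v : Vertex (AX T) n, Subgroup.comap (insVh v) (ΛB T ψ)

lemma mem_SecOK {n : ℕ} {s : TreeAut (shift (AX T) n)} :
    s ∈ SecOK T ψ n ↔ ∀ v : Vertex (AX T) n, insT v s ∈ ΛB T ψ := by
  rw [SecOK, Subgroup.mem_iInf]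
  constructor
  · intro h v
    exact Subgroup.mem_comap.mp (h v)
  · intro h v
    exact Subgroup.mem_comap.mpr (h v)

/-- The automorphisms all of whose sections at level `n` have all insertions in `Λ`. -/
noncomputable def GoodSec (n : ℕ) : Subgroup (TreeAut (AX T)) where
  carrier := {g | ∀ v : Vertex (AX T) n, sectionAt g v ∈ SecOK T ψ n}
  one_mem' := fun v => by
    rw [sectionAt_one]
    exact one_mem _
  mul_mem' := by
    rintro a b ha hb v
    rw [sectionAt_mul]
    exact mul_mem (ha _) (hb v)
  inv_mem' := by
    rintro a ha v
    rw [sectionAt_inv]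
    exact inv_mem (ha _)

lemma ΛB_le_GoodSec (n : ℕ) : ΛB T ψ ≤ GoodSec T ψ n := by
  refine sup_le ?_ ?_
  · rintro f ⟨j, hj⟩ v
    refine mem_SecOK T ψ |>.mpr fun v' => ?_
    refine finSub_le_ΛB T ψ ⟨n + j, finUpTo_insT v' ?_⟩
    exact (hj.mono (by omega : j ≤ n + j)).sectionAt' v
  · rintro g ⟨h, rfl⟩ v
    haveI := Classical.propDecidable (v = onesV (AX T) n)
    by_cases hv : v = onesV (AX T) n
    · subst hv
      refine mem_SecOK T ψ |>.mpr fun v' => ?_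
      have hsec : sectionAt (sE T ψ h) (onesV (AX T) n)
          = spinA (Y := shift (AX T) n) (fun k => ξA T (n + k)) (fun k => φA T ψ h (n + k)) :=
        spinA_section_ones (ξA_ne_one T) _ n
      rw [hsec, insT_conj (onesV (AX T) n) v' _]
      have hdec := spinA_decomp (ξ := ξA T) (ξA_ne_one T) (fun k => φA T ψ h k) n
      have hins : insT (onesV (AX T) n)
          (spinA (Y := shift (AX T) n) (fun k => ξA T (n + k)) (fun k => φA T ψ h (n + k)))
          = sE T ψ h * (ofPortrait (lowLab (ξA T) (fun k => φA T ψ h k) n))⁻¹ := by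
        have h2 : sE T ψ h = insT (onesV (AX T) n)
            (spinA (Y := shift (AX T) n) (fun k => ξA T (n + k)) (fun k => φA T ψ h (n + k)))
            * ofPortrait (lowLab (ξA T) (fun k => φA T ψ h k) n) := hdec
        rw [h2, mul_assoc, mul_inv_cancel, mul_one]
      rw [hins]
      have hτ : transD (onesV (AX T) n) v' ∈ ΛB T ψ :=
        finSub_le_ΛB T ψ ⟨n, transD_finUpTo _ _⟩
      have hcorr : ofPortrait (lowLab (ξA T) (fun k => φA T ψ h k) n) ∈ ΛB T ψ :=
        finSub_le_ΛB T ψ ⟨n + 1, lowLab_finUpTo _ n⟩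
      exact mul_mem (mul_mem hτ (mul_mem (sE_mem_ΛB T ψ h) (inv_mem hcorr))) (inv_mem hτ)
    · refine mem_SecOK T ψ |>.mpr fun v' => ?_
      have hfu : FinUpTo 1 (sectionAt (sE T ψ h) v) :=
        spinA_section_off (ξA_ne_one T) _ v hv
      exact finSub_le_ΛB T ψ ⟨n + 1, finUpTo_insT v' hfu⟩

lemma layered_ΛB : Layered (ΛB T ψ) := by
  intro g hg n v
  refine ⟨insT v (sectionAt g v), ?_, insT_fixesOutside v _, sectionAt_insT v _⟩
  exact (mem_SecOK T ψ).mp (ΛB_le_GoodSec T ψ n hg v) v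

lemma insT_section_mem (g : TreeAut (AX T)) (hg : g ∈ ΛB T ψ) {n : ℕ}
    (v w : Vertex (AX T) n) : insT w (sectionAt g v) ∈ ΛB T ψ :=
  (mem_SecOK T ψ).mp (ΛB_le_GoodSec T ψ n hg v) w

end Concrete


section Rist

variable (T : ℕ → Type) [∀ n, Group (T n)] [∀ n, Finite (T n)]
variable {H : Type} [Group H] (ψ : H →* ∀ n, T n)

lemma level_one_down {g : TreeAut (AX T)} {j : ℕ} (hj : g.1 (j + 1) = 1) : g.1 j = 1 := by
  refine Equiv.ext fun v => ?_
  have hc := g.compat j (Fin.snoc (α := fun i : Fin (j + 1) => AX T (i : ℕ)) v 1)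
  rw [hj] at hc
  rw [show (1 : Equiv.Perm (Vertex (AX T) (j + 1)))
      (Fin.snoc (α := fun i : Fin (j + 1) => AX T (i : ℕ)) v 1)
      = Fin.snoc (α := fun i : Fin (j + 1) => AX T (i : ℕ)) v 1 from rfl,
    Fin.init_snoc] at hc
  exact hc.symm

lemma level_one_low {g : TreeAut (AX T)} {n : ℕ} (h1 : g.1 n = 1) :
    ∀ k, k ≤ n → g.1 k = 1 := by
  have key : ∀ d k, k + d = n → g.1 k = 1 := by
    intro d
    induction d with
    | zero =>
        intro k hk
        have : k = n := by omega
        subst this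
        exact h1
    | succ d ih =>
        intro k hk
        exact level_one_down T (ih (k + 1) (by omega))
  intro k hk
  exact key (n - k) k (by omega)

lemma prodList_low (g : TreeAut (AX T)) (n : ℕ) (l : List (Vertex (AX T) n)) (k : ℕ)
    (hk : k ≤ n) (w : Vertex (AX T) k) :
    ((l.map (fun v => insT v (sectionAt g v))).prod).1 k w = w := by
  induction l with
  | nil => rfl
  | cons v t ih =>
      rw [List.map_cons, List.prod_cons, treeAut_mul_apply, ih]
      rcases lt_or_eq_of_le hk with h | h
      · exact insT_low v _ k h w
      · subst h
        exact insP_at_n v _ w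

lemma prodList_notmem (g : TreeAut (AX T)) (n : ℕ) (l : List (Vertex (AX T) n)) (m : ℕ)
    (w : Vertex (AX T) (n + m)) (hw : front (n := n) (m := m) w ∉ l) :
    ((l.map (fun v => insT v (sectionAt g v))).prod).1 (n + m) w = w := by
  induction l with
  | nil => rfl
  | cons v t ih =>
      rw [List.map_cons, List.prod_cons, treeAut_mul_apply,
        ih (fun hc => hw (List.mem_cons_of_mem v hc)), insT_apply,
        insQ_neg _ _ _ _ (fun hc => hw (by rw [hc]; exact List.mem_cons_self))]

lemma prodList_mem (g : TreeAut (AX T)) (n : ℕ) (l : List (Vertex (AX T) n)) (hl : l.Nodup)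
    (m : ℕ) (w : Vertex (AX T) (n + m)) (hw : front (n := n) (m := m) w ∈ l) :
    ((l.map (fun v => insT v (sectionAt g v))).prod).1 (n + m) w
      = append (front (n := n) (m := m) w)
          ((sectionAt g (front (n := n) (m := m) w)).1 m (back w)) := by
  induction l with
  | nil => exact absurd hw List.not_mem_nil
  | cons v t ih =>
      rw [List.map_cons, List.prod_cons, treeAut_mul_apply]
      haveI := Classical.propDecidable (front (n := n) (m := m) w ∈ t)
      by_cases hwt : front (n := n) (m := m) w ∈ t
      · have hne : front (n := n) (m := m) w ≠ v := by
          intro hc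
          exact (List.nodup_cons.mp hl).1 (hc ▸ hwt)
        rw [ih (List.nodup_cons.mp hl).2 hwt, insT_apply,
          insQ_neg _ _ _ _ (by rw [front_append]; exact hne)]
      · have hv : front (n := n) (m := m) w = v := by
          rcases List.mem_cons.mp hw with h | h
          · exact h
          · exact absurd h hwt
        rw [prodList_notmem T g n t m w (fun hc => hwt hc), insT_apply,
          insQ_pos _ _ _ _ hv, hv]

lemma mem_ristL_of_level_one {g : TreeAut (AX T)} (hg : g ∈ ΛB T ψ) (n : ℕ)
    (h1 : g.1 n = 1) : g ∈ RistL (ΛB T ψ) n := by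
  haveI := Fintype.ofFinite (Vertex (AX T) n)
  set L := (Finset.univ (α := Vertex (AX T) n)).toList with hL
  have hnd : L.Nodup := Finset.nodup_toList _
  have hmem : ∀ v : Vertex (AX T) n, v ∈ L := fun v =>
    Finset.mem_toList.mpr (Finset.mem_univ v)
  have hPmem : ((L.map (fun v => insT v (sectionAt g v))).prod) ∈ RistL (ΛB T ψ) n := by
    refine Subgroup.list_prod_mem _ ?_
    intro x hx
    rw [List.mem_map] at hx
    obtain ⟨v, -, rfl⟩ := hx
    refine Subgroup.subset_closure (Set.mem_iUnion.mpr ⟨v, ?_⟩)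
    exact ⟨insT_section_mem T ψ g hg v v, insT_fixesOutside v _⟩
  have hPg : (L.map (fun v => insT v (sectionAt g v))).prod = g := by
    apply treeAut_ext
    intro k w
    rcases le_or_gt k n with hk | hk
    · rw [prodList_low T g n L k hk w, level_one_low T h1 k hk]
      rfl
    · obtain ⟨m, rfl⟩ := Nat.exists_eq_add_of_le (le_of_lt hk)
      rw [prodList_mem T g n L hnd m w (hmem _)]
      have hfr : front (n := n) (m := m) (g.1 (n + m) w) = front (n := n) (m := m) w := by
        rw [front_act g n m w, h1]
        rfl
      have hsec : (sectionAt g (front (n := n) (m := m) w)).1 m (back w)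
          = back (g.1 (n + m) w) := by
        show back (g.1 (n + m) (append (front w) (back w))) = back (g.1 (n + m) w)
        rw [append_front_back]
      rw [hsec, ← hfr]
      exact append_front_back (g.1 (n + m) w)
  rw [← hPg]
  exact hPmem

/-- Evaluation of the level-`n` permutation, as a homomorphism. -/
noncomputable def evalLevel (n : ℕ) : ↥(ΛB T ψ) →* Equiv.Perm (Vertex (AX T) n) :=
  ((Pi.evalMonoidHom (fun k => Equiv.Perm (Vertex (AX T) k)) n).comp
    (treeAutGroup (AX T)).subtype).comp (ΛB T ψ).subtype

lemma relindex_ristL (n : ℕ) : (RistL (ΛB T ψ) n).relIndex (ΛB T ψ) ≠ 0 := by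
  have hker : (evalLevel T ψ n).ker ≤ (RistL (ΛB T ψ) n).subgroupOf (ΛB T ψ) := by
    intro x hx
    have hx1 : (x : TreeAut (AX T)).1 n = 1 := hx
    exact mem_ristL_of_level_one T ψ x.2 n hx1
  have hfin : Finite (↥(ΛB T ψ) ⧸ (evalLevel T ψ n).ker) := by
    have : Finite (Equiv.Perm (Vertex (AX T) n)) := inferInstance
    exact Finite.of_equiv _ (QuotientGroup.quotientKerEquivRange (evalLevel T ψ n)).symm.toEquiv
  have hne : (evalLevel T ψ n).ker.index ≠ 0 := Subgroup.index_ne_zero_of_finite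
  have hdvd := Subgroup.index_dvd_of_le hker
  exact fun hc => hne (Nat.eq_zero_of_zero_dvd (hc ▸ hdvd))

end Rist


section Germ

variable (T : ℕ → Type) [∀ n, Group (T n)] [∀ n, Finite (T n)]
variable {H : Type} [Group H] (ψ : H →* ∀ n, T n)

/-- Eventually-trivial sequences of letters (ends close to the distinguished ray). -/
def IsE (e : ∀ n, AX T n) : Prop := ∃ N, ∀ n, N ≤ n → e n = 1

/-- Truncation of an end to a vertex. -/
def etr (e : ∀ n, AX T n) (n : ℕ) : Vertex (AX T) n := fun i => e (i : ℕ)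

/-- The image end of an end under a tree automorphism. -/
noncomputable def imgSeq (g : TreeAut (AX T)) (e : ∀ n, AX T n) : ∀ n, AX T n :=
  fun n => g.1 (n + 1) (etr T e (n + 1)) (Fin.last n)

lemma etr_imgSeq (g : TreeAut (AX T)) (e : ∀ n, AX T n) :
    ∀ n, etr T (imgSeq T g e) n = g.1 n (etr T e n) := by
  intro n
  induction n with
  | zero =>
      funext i
      exact absurd i.isLt (Nat.not_lt_zero _)
  | succ n ih =>
      funext i
      refine Fin.lastCases ?_ ?_ i
      · rfl
      · intro j
        show imgSeq T g e (j : ℕ) = g.1 (n + 1) (etr T e (n + 1)) j.castSucc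
        have h1 : g.1 (n + 1) (etr T e (n + 1)) j.castSucc
            = Fin.init (g.1 (n + 1) (etr T e (n + 1))) j := rfl
        rw [h1, g.compat n (etr T e (n + 1)),
          show Fin.init (etr T e (n + 1)) = etr T e n from rfl]
        exact congrFun ih j

lemma imgSeq_mul (g h : TreeAut (AX T)) (e : ∀ n, AX T n) :
    imgSeq T (g * h) e = imgSeq T g (imgSeq T h e) := by
  funext n
  show (g * h).1 (n + 1) (etr T e (n + 1)) (Fin.last n)
      = g.1 (n + 1) (etr T (imgSeq T h e) (n + 1)) (Fin.last n)
  rw [treeAut_mul_apply, etr_imgSeq]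

/-- The shifted spinal element. -/
noncomputable def spSh (n : ℕ) (h : H) : TreeAut (shift (AX T) n) :=
  spinA (Y := shift (AX T) n) (fun k => ξA T (n + k)) (fun k => φA T ψ h (n + k))

lemma spSh_mul (n : ℕ) (a b : H) :
    spSh T ψ n (a * b) = spSh T ψ n a * spSh T ψ n b := by
  have hc : (fun k => φA T ψ (a * b) (n + k))
      = fun k => φA T ψ a (n + k) * φA T ψ b (n + k) := by
    funext k
    rw [(φA T ψ).map_mul]
    rfl
  rw [spSh, spSh, spSh, hc, ← spinA_mul (fun k => ξA_ne_one T (n + k))]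

lemma spSh_one (n : ℕ) : spSh T ψ n 1 = 1 := by
  refine spinA_eq_one _ (fun k => ?_)
  show φA T ψ 1 (n + k) = 1
  rw [(φA T ψ).map_one]
  rfl

lemma spSh_inv (n : ℕ) (a : H) : spSh T ψ n a⁻¹ = (spSh T ψ n a)⁻¹ := by
  apply eq_inv_of_mul_eq_one_right
  rw [← spSh_mul, mul_inv_cancel, spSh_one]

/-- `g` has germ `h` at the end `e`. -/
noncomputable def GermAt (g : TreeAut (AX T)) (e : ∀ n, AX T n) (h : H) : Prop :=
  ∃ N, ∀ n, N ≤ n → RayR ((spSh T ψ n h)⁻¹ * sectionAt g (etr T e n))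

/-- All germ values of `g` at eventually-trivial ends lie in `M`. -/
def condW (M : Subgroup H) (g : TreeAut (AX T)) : Prop :=
  ∀ e : ∀ n, AX T n, IsE T e → IsE T (imgSeq T g e) ∧ ∃ h ∈ M, GermAt T ψ g e h

lemma condW_mul {M : Subgroup H} {a b : TreeAut (AX T)} (ha : condW T ψ M a)
    (hb : condW T ψ M b) : condW T ψ M (a * b) := by
  intro e he
  obtain ⟨hbE, hb2⟩ := hb e he
  obtain ⟨haE, ha2⟩ := ha (imgSeq T b e) hbE
  constructor
  · rw [imgSeq_mul]
    exact haE
  · obtain ⟨h₁, hM₁, N₁, hg₁⟩ := ha2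
    obtain ⟨h₂, hM₂, N₂, hg₂⟩ := hb2
    refine ⟨h₁ * h₂, M.mul_mem hM₁ hM₂, max N₁ N₂, fun n hn => ?_⟩
    have e1 : sectionAt (a * b) (etr T e n)
        = sectionAt a (etr T (imgSeq T b e) n) * sectionAt b (etr T e n) := by
      rw [sectionAt_mul, etr_imgSeq]
    rw [e1, spSh_mul]
    have hA := hg₁ n (le_trans (le_max_left _ _) hn)
    have hB := hg₂ n (le_trans (le_max_right _ _) hn)
    have halg : (spSh T ψ n h₁ * spSh T ψ n h₂)⁻¹
        * (sectionAt a (etr T (imgSeq T b e) n) * sectionAt b (etr T e n))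
        = ((spSh T ψ n h₂)⁻¹ * ((spSh T ψ n h₁)⁻¹ * sectionAt a (etr T (imgSeq T b e) n))
            * spSh T ψ n h₂) * ((spSh T ψ n h₂)⁻¹ * sectionAt b (etr T e n)) := by
      group
    rw [halg]
    exact (hA.conj (fun k => ξA_ne_one T (n + k)) _).mul hB

lemma condW_fin {M : Subgroup H} {f : TreeAut (AX T)} (hf : f ∈ finSub (AX T)) :
    condW T ψ M f := by
  obtain ⟨j, hj⟩ := hf
  intro e he
  obtain ⟨N₀, hN₀⟩ := he
  constructor
  · refine ⟨max N₀ j, fun n hn => ?_⟩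
    show f.1 (n + 1) (etr T e (n + 1)) (Fin.last n) = 1
    rw [hj (n + 1) _ (Fin.last n) (by show j ≤ n; omega)]
    exact hN₀ n (by omega)
  · refine ⟨1, M.one_mem, j, fun n hn => ?_⟩
    rw [sectionAt_eq_one_of_finUpTo (hj.mono hn) _, spSh_one, inv_one, mul_one]
    exact rayR_one

lemma condW_sE {M : Subgroup H} {m : H} (hm : m ∈ M) : condW T ψ M (sE T ψ m) := by
  intro e he
  haveI := Classical.propDecidable (∀ n, e n = 1)
  by_cases hone : ∀ n, e n = 1
  · have hetr : ∀ n, etr T e n = onesV (AX T) n := by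
      intro n
      funext i
      exact hone (i : ℕ)
    constructor
    · refine ⟨0, fun n _ => ?_⟩
      show (sE T ψ m).1 (n + 1) (etr T e (n + 1)) (Fin.last n) = 1
      rw [hetr (n + 1),
        show (sE T ψ m).1 (n + 1) (onesV (AX T) (n + 1)) = onesV (AX T) (n + 1) from
          spinA_fixes (ξA_ne_one T) _ _ (fun i _ => rfl)]
      rfl
    · refine ⟨m, hm, 0, fun n _ => ?_⟩
      rw [hetr n,
        show sectionAt (sE T ψ m) (onesV (AX T) n) = spSh T ψ n m from
          spinA_section_ones (ξA_ne_one T) _ n,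
        inv_mul_cancel]
      exact rayR_one
  · push_neg at hone
    obtain ⟨p, hp⟩ := hone
    obtain ⟨N₀, hN₀⟩ := he
    constructor
    · refine ⟨max N₀ (p + 2), fun n hn => ?_⟩
      show (sE T ψ m).1 (n + 1) (etr T e (n + 1)) (Fin.last n) = 1
      rw [show (sE T ψ m).1 (n + 1) (etr T e (n + 1)) (Fin.last n) = _ from
          portraitAct_letter (spinLab (ξA T) (fun k => φA T ψ m k)) (n + 1)
            (etr T e (n + 1)) (Fin.last n),
        spinLab_eq_one_of_interior _ _ (⟨p, by show p < n; omega⟩ : Fin ((Fin.last n : Fin (n+1)) : ℕ))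
          (by show p + 1 < n; omega) (by
            show e p ≠ 1
            exact hp)]
      exact hN₀ n (by omega)
    · refine ⟨1, M.one_mem, max N₀ (p + 2), fun n hn => ?_⟩
      have hsec : sectionAt (sE T ψ m) (etr T e n) = 1 := by
        rw [show sE T ψ m = ofPortrait (spinLab (ξA T) (fun k => φA T ψ m k)) from rfl,
          sectionAt_ofPortrait]
        apply ofPortrait_eq_one
        intro m' p'
        refine spinLab_eq_one_of_interior _ _ (Fin.castAdd m' ⟨p, by show p < n; omega⟩)
          (by show p + 1 < n + m'; omega) ?_
        rw [append_castAdd]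
        exact hp
      rw [hsec, spSh_one, inv_one, mul_one]
      exact rayR_one

/-- The subgroup of automorphisms all of whose germs lie in `M`. -/
noncomputable def WM (M : Subgroup H) : Subgroup (TreeAut (AX T)) where
  carrier := {g | condW T ψ M g ∧ condW T ψ M g⁻¹}
  one_mem' := ⟨condW_fin T ψ (one_mem (finSub (AX T))),
    by rw [inv_one]; exact condW_fin T ψ (one_mem (finSub (AX T)))⟩
  mul_mem' := by
    rintro a b ⟨ha1, ha2⟩ ⟨hb1, hb2⟩
    refine ⟨condW_mul T ψ ha1 hb1, ?_⟩
    rw [mul_inv_rev]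
    exact condW_mul T ψ hb2 ha2
  inv_mem' := by
    rintro a ⟨ha1, ha2⟩
    refine ⟨ha2, ?_⟩
    rw [inv_inv]
    exact ha1

lemma finSub_le_WM (M : Subgroup H) : finSub (AX T) ≤ WM T ψ M := by
  intro f hf
  exact ⟨condW_fin T ψ hf, condW_fin T ψ (inv_mem hf)⟩

lemma sE_mem_WM {M : Subgroup H} {m : H} (hm : m ∈ M) : sE T ψ m ∈ WM T ψ M := by
  refine ⟨condW_sE T ψ hm, ?_⟩
  rw [← map_inv]
  exact condW_sE T ψ (inv_mem hm)

lemma sep_WM {M : Subgroup H} (hinj : Function.Injective ψ) {h : H}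
    (hW : sE T ψ h ∈ WM T ψ M) : h ∈ M := by
  obtain ⟨hc, -⟩ := hW
  obtain ⟨-, m, hmM, N, hg⟩ := hc (fun n => 1) ⟨0, fun _ _ => rfl⟩
  have hRR := hg N le_rfl
  rw [show etr T (fun n => (1 : AX T n)) N = onesV (AX T) N from rfl,
    show sectionAt (sE T ψ h) (onesV (AX T) N) = spSh T ψ N h from
      spinA_section_ones (ξA_ne_one T) _ N,
    show (spSh T ψ N m)⁻¹ * spSh T ψ N h = spSh T ψ N (m⁻¹ * h) from by
      rw [spSh_mul, spSh_inv]] at hRR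
  obtain ⟨j, hj⟩ := hRR
  have hdet := spinA_detect (fun k => ξA_ne_one T (N + k))
    (fun k => φA T ψ (m⁻¹ * h) (N + k)) j hj
  have hone : m⁻¹ * h = 1 := by
    refine φA_eventually T ψ hinj _ (N + j + 1) (fun t ht => ?_)
    obtain ⟨d, rfl⟩ : ∃ d, t = N + d := ⟨t - N, by omega⟩
    exact hdet d (by omega)
  have hhm : m = h := inv_mul_eq_one.mp hone
  rw [← hhm]
  exact hmM

end Germ


section Coatom

variable (T : ℕ → Type) [∀ n, Group (T n)] [∀ n, Finite (T n)]
variable {H : Type} [Group H] (ψ : H →* ∀ n, T n)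

/-- The defining property of the Zorn poset used to produce maximal subgroups. -/
def PP (M : Subgroup H) (K : Subgroup ↥(ΛB T ψ)) : Prop :=
  (finSub (AX T)).subgroupOf (ΛB T ψ) ≤ K ∧ (∀ m ∈ M, ιB T ψ m ∈ K)
    ∧ (∀ h : H, ιB T ψ h ∈ K → h ∈ M)

lemma top_of_PP_fail {M : Subgroup H} (hM : IsCoatom M) {K : Subgroup ↥(ΛB T ψ)}
    (hfin : (finSub (AX T)).subgroupOf (ΛB T ψ) ≤ K) {h : H} (hh : h ∉ M)
    (hhK : ιB T ψ h ∈ K) (hMK : ∀ m ∈ M, ιB T ψ m ∈ K) : K = ⊤ := by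
  have hS : Subgroup.comap (ιB T ψ) K = ⊤ := by
    refine hM.2 _ (lt_of_le_of_ne (fun m hm => hMK m hm) (fun hc => hh ?_))
    rw [hc]
    exact hhK
  have hrange : ∀ h' : H, ιB T ψ h' ∈ K := by
    intro h'
    have : h' ∈ Subgroup.comap (ιB T ψ) K := by
      rw [hS]
      trivial
    exact this
  refine (Subgroup.eq_top_iff' K).mpr fun x => ?_
  have hmap : ΛB T ψ ≤ Subgroup.map (ΛB T ψ).subtype K := by
    refine sup_le ?_ ?_
    · intro f hf
      exact Subgroup.mem_map.mpr ⟨⟨f, finSub_le_ΛB T ψ hf⟩,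
        hfin ((Subgroup.mem_subgroupOf).mpr hf), rfl⟩
    · rintro g ⟨h', rfl⟩
      exact Subgroup.mem_map.mpr ⟨ιB T ψ h', hrange h', rfl⟩
  obtain ⟨y, hyK, hyx⟩ := hmap x.2
  have hyx2 : y = x := Subtype.ext hyx
  rw [← hyx2]
  exact hyK

/-- The base point of the Zorn argument. -/
noncomputable def K₀ (M : Subgroup H) : Subgroup ↥(ΛB T ψ) :=
  (finSub (AX T)).subgroupOf (ΛB T ψ) ⊔ Subgroup.map (ιB T ψ) M

lemma PP_K₀ (hinj : Function.Injective ψ) (M : Subgroup H) : PP T ψ M (K₀ T ψ M) := by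
  refine ⟨le_sup_left, fun m hm =>
    (le_sup_right : Subgroup.map (ιB T ψ) M ≤ K₀ T ψ M)
      (Subgroup.mem_map.mpr ⟨m, hm, rfl⟩), ?_⟩
  intro h hh
  have hmapW : Subgroup.map (ΛB T ψ).subtype (K₀ T ψ M) ≤ WM T ψ M := by
    rw [K₀, Subgroup.map_sup]
    refine sup_le ?_ ?_
    · rw [Subgroup.subgroupOf_map_subtype]
      exact le_trans inf_le_left (finSub_le_WM T ψ M)
    · rw [Subgroup.map_map]
      rintro g ⟨m, hm, rfl⟩
      exact sE_mem_WM T ψ hm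
  have hW : sE T ψ h ∈ WM T ψ M := hmapW (Subgroup.mem_map.mpr ⟨ιB T ψ h, hh, rfl⟩)
  exact sep_WM T ψ hinj hW

lemma exists_coatom (hinj : Function.Injective ψ) {M : Subgroup H} (hM : IsCoatom M) :
    ∃ K : Subgroup ↥(ΛB T ψ), IsCoatom K ∧ ∀ h : H, (ιB T ψ h ∈ K ↔ h ∈ M) := by
  obtain ⟨h₀, hh₀⟩ : ∃ h₀, h₀ ∉ M := by
    by_contra hc
    push_neg at hc
    exact hM.1 ((Subgroup.eq_top_iff' M).mpr hc)
  have hzorn := zorn_le_nonempty₀ {K : Subgroup ↥(ΛB T ψ) | PP T ψ M K} ?_ (K₀ T ψ M)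
    (PP_K₀ T ψ hinj M)
  · obtain ⟨K, -, hmax⟩ := hzorn
    have hPP : PP T ψ M K := hmax.1
    refine ⟨K, ⟨?_, ?_⟩, fun h => ⟨hPP.2.2 h, fun hh => hPP.2.1 h hh⟩⟩
    · intro htop
      exact hh₀ (hPP.2.2 h₀ (by rw [htop]; trivial))
    · intro B hB
      have hBs : ¬ PP T ψ M B := fun hc =>
        absurd (hmax.2 hc (le_of_lt hB)) (not_le_of_gt hB)
      have h1 : (finSub (AX T)).subgroupOf (ΛB T ψ) ≤ B := le_trans hPP.1 (le_of_lt hB)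
      have h2 : ∀ m ∈ M, ιB T ψ m ∈ B := fun m hm => (le_of_lt hB) (hPP.2.1 m hm)
      have h3 : ∃ h, ιB T ψ h ∈ B ∧ h ∉ M := by
        by_contra hc
        push_neg at hc
        exact hBs ⟨h1, h2, hc⟩
      obtain ⟨h, hhB, hhM⟩ := h3
      exact top_of_PP_fail T ψ hM h1 hhM hhB h2
  · intro c hcs hchain y hy
    refine ⟨{ carrier := {x | ∃ K ∈ c, x ∈ K}
              one_mem' := ⟨y, hy, one_mem y⟩
              mul_mem' := ?_
              inv_mem' := ?_ }, ⟨?_, ?_, ?_⟩, fun z hz x hx => ⟨z, hz, hx⟩⟩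
    · rintro a b ⟨K₁, hK₁, ha⟩ ⟨K₂, hK₂, hb⟩
      rcases hchain.total hK₁ hK₂ with h | h
      · exact ⟨K₂, hK₂, mul_mem (h ha) hb⟩
      · exact ⟨K₁, hK₁, mul_mem ha (h hb)⟩
    · rintro a ⟨K₁, hK₁, ha⟩
      exact ⟨K₁, hK₁, inv_mem ha⟩
    · intro f hf
      exact ⟨y, hy, (hcs hy).1 hf⟩
    · intro m hm
      exact ⟨y, hy, (hcs hy).2.1 m hm⟩
    · rintro h ⟨K₁, hK₁, hh⟩
      exact (hcs hK₁).2.2 h hh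

end Coatom

/-- For every countably based residually finite group `H` there is a layered branch
group `Λ` containing a copy of `H` and admitting an injection from the non-normal
maximal subgroups of `H` into the maximal subgroups of `Λ`. -/
theorem statement16 (H : Type) [Group H]
    (T : ℕ → Type) [∀ n, Group (T n)] [∀ n, Finite (T n)]
    (ψ : H →* ∀ n, T n) (hinj : Function.Injective ψ)
    (hsub : ∀ n, Function.Surjective (fun h : H => ψ h n)) :
    ∃ (X : ℕ → Type), (∀ n, Finite (X n)) ∧ (∀ n, 2 ≤ Nat.card (X n)) ∧
      ∃ Λ : Subgroup (TreeAut X), SphericallyTransitive Λ ∧ Layered Λ ∧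
        (∀ n, (RistL Λ n).relIndex Λ ≠ 0) ∧
        (∃ ι : H →* ↥Λ, Function.Injective ι) ∧
        (∃ f : {M : Subgroup H // IsCoatom M ∧ ¬ M.Normal} →
            {N : Subgroup ↥Λ // IsCoatom N}, Function.Injective f) := by
  refine ⟨AX T, fun n => inferInstance, two_le_card_AX T, ΛB T ψ, sph_ΛB T ψ, layered_ΛB T ψ,
    relindex_ristL T ψ, ⟨ιB T ψ, ιB_injective T ψ hinj⟩, ?_⟩
  have hex := fun (M : {M : Subgroup H // IsCoatom M ∧ ¬ M.Normal}) =>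
    exists_coatom T ψ hinj M.2.1
  choose K hK1 hK2 using hex
  refine ⟨fun M => ⟨K M, hK1 M⟩, ?_⟩
  intro M₁ M₂ h12
  have hKK : K M₁ = K M₂ := congrArg Subtype.val h12
  apply Subtype.ext
  apply Subgroup.ext
  intro h
  rw [← hK2 M₁ h, ← hK2 M₂ h, hKK]

end BranchPaper
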